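/- arXiv:1012.0888 — 10 statements merged into one kernel-verified Lean document; each statement's English description precedes it below -/
import Mathlib

section
/- Let f_1(y) = y - 1 and f_i(y) = y - 2 - 1/f_{i-1}(y) for i ≥ 2. Then for every i ≥ 1 and every real y ≥ 4.383, f_i(y) > y/(y-2). -/
/-- The sequence of functions from the paper, indexed so that `f 0 = f₁`:
`f₁ y = y - 1` and `f_{i+1} y = y - 2 - 1 / f_i y`. -/
noncomputable def paperF : ℕ → ℝ → ℝ
  | 0, y => y - 1
  | n + 1, y => y - 2 - 1 / paperF n y

lemma paperF_key : ∀ n : ℕ, ∀ y : ℝ, 4.383 ≤ y → paperF n y > y / (y - 2) := by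
  intro n
  induction n with
  | zero =>
    intro y hy
    have h2 : (0:ℝ) < y - 2 := by norm_num at hy ⊢; linarith
    rw [gt_iff_lt, div_lt_iff₀ h2]
    show y < (y - 1) * (y - 2)
    nlinarith
  | succ n ih =>
    intro y hy
    have h2 : (0:ℝ) < y - 2 := by norm_num at hy ⊢; linarith
    have hy0 : (0:ℝ) < y := by linarith
    have hih := ih y hy
    have hfpos : 0 < paperF n y := lt_trans (div_pos hy0 h2) hih
    have hinv : 1 / paperF n y < (y - 2) / y := by
      rw [div_lt_div_iff₀ hfpos hy0]
      rw [gt_iff_lt, div_lt_iff₀ h2] at hih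
      linarith
    show y - 2 - 1 / paperF n y > y / (y - 2)
    have hkey : y / (y - 2) ≤ y - 2 - (y - 2) / y := by
      rw [div_le_iff₀ h2, show y - 2 - (y - 2) / y = ((y - 2) * y - (y - 2)) / y from by
        field_simp, div_mul_eq_mul_div, le_div_iff₀ hy0]
      norm_num at hy
      nlinarith [sq_nonneg (y - 4.383)]
    linarith

theorem stmt_0 :
    ∀ i : ℕ, 1 ≤ i → ∀ y : ℝ, 4.383 ≤ y → paperF (i - 1) y > y / (y - 2) := by
  intro i _ y hy
  exact paperF_key _ y hy
end

section
/- Let f_1(y) = y - 1 and f_i(y) = y - 2 - 1/f_{i-1}(y) for i ≥ 2. Then for all i, j ≥ 1 and all real y ≥ 4.383, f_i(y) · f_{i+1}(y) > f_j(y). -/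
lemma paperF_lb (n : ℕ) (y : ℝ) (hy : 4.383 ≤ y) :
    y / (y - 2) < paperF n y := by
  have hy' : (4383:ℝ)/1000 ≤ y := by norm_num at hy; linarith
  have h2 : (0:ℝ) < y - 2 := by linarith
  have hy0 : (0:ℝ) < y := by linarith
  induction n with
  | zero =>
      simp only [paperF]
      rw [div_lt_iff₀ h2]
      nlinarith [hy']
  | succ n ih =>
      have hpos : 0 < paperF n y := lt_trans (by positivity) ih
      have hinv : 1 / paperF n y < (y - 2) / y := by
        rw [div_lt_div_iff₀ hpos hy0]
        nlinarith [(div_lt_iff₀ h2).mp ih]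
      have key : y / (y - 2) + (y - 2) / y ≤ y - 2 := by
        rw [div_add_div _ _ (ne_of_gt h2) (ne_of_gt hy0), div_le_iff₀ (by positivity)]
        nlinarith [hy', mul_nonneg (sub_nonneg.2 hy') (sub_nonneg.2 hy'),
          mul_nonneg (mul_nonneg (sub_nonneg.2 hy') (sub_nonneg.2 hy')) hy0.le,
          sq_nonneg (y - 4383/1000)]
      simp only [paperF]
      linarith

lemma paperF_ub (n : ℕ) (y : ℝ) (hy : 4.383 ≤ y) :
    paperF n y ≤ y - 1 := by
  cases n with
  | zero => simp [paperF]
  | succ n =>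
      have h2 : (0:ℝ) < y - 2 := by norm_num at hy ⊢; linarith
      have hpos : 0 < paperF n y := lt_trans (by positivity) (paperF_lb n y hy)
      simp only [paperF]
      have : 0 < 1 / paperF n y := by positivity
      linarith

theorem stmt_2 :
    ∀ i j : ℕ, 1 ≤ i → 1 ≤ j → ∀ y : ℝ, 4.383 ≤ y →
      paperF (i - 1) y * paperF i y > paperF (j - 1) y := by
  intro i j hi hj y hy
  obtain ⟨k, rfl⟩ := Nat.exists_eq_add_of_le hi
  have h2 : (0:ℝ) < y - 2 := by norm_num at hy ⊢; linarith
  have hlb := paperF_lb k y hy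
  have hpos : 0 < paperF k y := lt_trans (by positivity) hlb
  have hne : paperF k y ≠ 0 := ne_of_gt hpos
  have e1 : 1 + k - 1 = k := by omega
  have e2 : 1 + k = k + 1 := by omega
  rw [e1, e2]
  have heq : paperF k y * paperF (k + 1) y = (y - 2) * paperF k y - 1 := by
    simp only [paperF]; field_simp
  rw [heq]
  have hub := paperF_ub (j - 1) y hy
  have : y < (y - 2) * paperF k y := by
    rw [← div_lt_iff₀' h2]; exact hlb
  linarith
end

section
/- Let G be a finite simple connected bipartite graph and let G' be obtained from G by adjoining a new vertex joined by an edge to some vertex of G. Then the Laplacian spectral radius of G' is strictly greater than that of G: λ(G') > λ(G). -/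
/-!
Let `x` be an eigenvector of `L(G)` for `λ(G)` and let `ε = ±1` be the signs of a proper
2-colouring. On every edge `(x u - x v)² ≤ (|x u| + |x v|)² = (ε u |x u| - ε v |x v|)²`, so
`y = ε |x|` has the same norm and at least the same Rayleigh quotient; hence `y` is again a
`λ(G)`-eigenvector. At a zero `u` of `y` the eigen-equation says that the neighbours' values,
which all carry the sign `-ε u`, sum to zero, so zeros of `y` spread along edges and, `G` being
connected, `y v₀ ≠ 0`. Extending `y` by `0` at the new vertex keeps its norm and adds `y v₀ ²` to
the Laplacian quadratic form, so `λ(G') ≥ λ(G) + y v₀ ² / ‖y‖² > λ(G)`.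
-/

open Matrix

namespace Matrix

variable {n : Type*} [Fintype n] [DecidableEq n] {M : Matrix n n ℝ} {lam : ℝ}

lemma exists_mulVec_eq_smul_of_mem_spectrum (h : lam ∈ spectrum ℝ M) :
    ∃ x : n → ℝ, x ≠ 0 ∧ M *ᵥ x = lam • x := by
  rw [← spectrum_toLin', ← Module.End.hasEigenvalue_iff_mem_spectrum] at h
  obtain ⟨x, hx⟩ := h.exists_hasEigenvector
  exact ⟨x, hx.2, by simpa using hx.apply_eq_smul⟩

lemma dotProduct_algebraMap_sub_mulVec (x : n → ℝ) :
    x ⬝ᵥ ((algebraMap ℝ _ lam - M) *ᵥ x) = lam * (x ⬝ᵥ x) - x ⬝ᵥ (M *ᵥ x) := by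
  rw [Algebra.algebraMap_eq_smul_one, sub_mulVec, dotProduct_sub, smul_mulVec, one_mulVec,
    dotProduct_smul, smul_eq_mul]

namespace IsHermitian

lemma posSemidef_algebraMap_sub (hM : M.IsHermitian)
    (hlam : lam ∈ upperBounds (spectrum ℝ M)) : (algebraMap ℝ _ lam - M).PosSemidef := by
  refine posSemidef_iff_isHermitian_and_spectrum_nonneg.2
    ⟨(IsSelfAdjoint.algebraMap _ (.all lam)).sub hM, ?_⟩
  rw [← spectrum.singleton_sub_eq]
  rintro _ ⟨_, rfl, μ, hμ, rfl⟩
  simpa using hlam hμ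

lemma dotProduct_mulVec_le (hM : M.IsHermitian) (hlam : lam ∈ upperBounds (spectrum ℝ M))
    (x : n → ℝ) : x ⬝ᵥ (M *ᵥ x) ≤ lam * (x ⬝ᵥ x) := by
  have := (hM.posSemidef_algebraMap_sub hlam).dotProduct_mulVec_nonneg x
  rw [star_trivial, dotProduct_algebraMap_sub_mulVec] at this
  linarith

lemma mulVec_eq_smul_of_dotProduct_mulVec_eq (hM : M.IsHermitian)
    (hlam : lam ∈ upperBounds (spectrum ℝ M)) {x : n → ℝ}
    (hx : x ⬝ᵥ (M *ᵥ x) = lam * (x ⬝ᵥ x)) : M *ᵥ x = lam • x := by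
  have h := ((hM.posSemidef_algebraMap_sub hlam).dotProduct_mulVec_zero_iff x).1
    (by rw [star_trivial, dotProduct_algebraMap_sub_mulVec, hx, sub_self])
  rwa [Algebra.algebraMap_eq_smul_one, sub_mulVec, smul_mulVec, one_mulVec, sub_eq_zero,
    eq_comm] at h

end IsHermitian

end Matrix

namespace SimpleGraph

variable {V : Type*} {G : SimpleGraph V}

lemma dotProduct_lapMatrix_mulVec [Fintype V] [DecidableEq V] [DecidableRel G.Adj] (x : V → ℝ) :
    x ⬝ᵥ (G.lapMatrix ℝ *ᵥ x) = (∑ i, ∑ j, if G.Adj i j then (x i - x j) ^ 2 else 0) / 2 := by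
  rw [← toLinearMap₂'_apply', lapMatrix_toLinearMap₂']

lemma Reachable.imp_of_forall_adj {p : V → Prop} (hp : ∀ ⦃u v⦄, G.Adj u v → p u → p v)
    {u v : V} (h : G.Reachable u v) : p u → p v := by
  obtain ⟨w⟩ := h
  induction w with
  | nil => exact id
  | cons ha _ ih => exact ih ∘ hp ha

namespace Coloring

def sign (c : G.Coloring (Fin 2)) (u : V) : ℝ := if c u = 0 then 1 else -1

def signedAbs (c : G.Coloring (Fin 2)) (x : V → ℝ) (u : V) : ℝ := c.sign u * |x u|

variable (c : G.Coloring (Fin 2))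

lemma sign_mul_self (u : V) : c.sign u * c.sign u = 1 := by
  unfold sign; split_ifs <;> norm_num

lemma sign_ne_zero (u : V) : c.sign u ≠ 0 := by
  unfold sign; split_ifs <;> norm_num

lemma sign_eq_neg_of_adj {u v : V} (h : G.Adj u v) : c.sign v = -c.sign u := by
  have hne := c.valid h
  unfold sign
  split_ifs <;> grind

lemma sign_mul_signedAbs (x : V → ℝ) (u : V) : c.sign u * c.signedAbs x u = |x u| := by
  rw [signedAbs, ← mul_assoc, c.sign_mul_self, one_mul]

lemma signedAbs_eq_zero_iff {x : V → ℝ} : c.signedAbs x = 0 ↔ x = 0 := by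
  simp only [funext_iff, Pi.zero_apply, signedAbs, mul_eq_zero, c.sign_ne_zero, false_or,
    abs_eq_zero]

lemma dotProduct_signedAbs_self [Fintype V] (x : V → ℝ) :
    c.signedAbs x ⬝ᵥ c.signedAbs x = x ⬝ᵥ x :=
  Finset.sum_congr rfl fun u _ => by
    rw [signedAbs, mul_mul_mul_comm, c.sign_mul_self, one_mul, abs_mul_abs_self]

variable [Fintype V] [DecidableEq V] [DecidableRel G.Adj] {lam : ℝ}

lemma dotProduct_lapMatrix_mulVec_le_signedAbs (x : V → ℝ) :
    x ⬝ᵥ (G.lapMatrix ℝ *ᵥ x) ≤ c.signedAbs x ⬝ᵥ (G.lapMatrix ℝ *ᵥ c.signedAbs x) := by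
  rw [dotProduct_lapMatrix_mulVec, dotProduct_lapMatrix_mulVec]
  gcongr with i _ j _
  split_ifs with h
  · rw [signedAbs, signedAbs, c.sign_eq_neg_of_adj h]
    calc (x i - x j) ^ 2 = |x i - x j| ^ 2 := (sq_abs _).symm
      _ ≤ (|x i| + |x j|) ^ 2 := by gcongr; exact abs_sub _ _
      _ = _ := by linear_combination -(|x i| + |x j|) ^ 2 * c.sign_mul_self i
  · rfl

lemma lapMatrix_mulVec_signedAbs_eq_smul (hlam : lam ∈ upperBounds (spectrum ℝ (G.lapMatrix ℝ)))
    {x : V → ℝ} (hx : G.lapMatrix ℝ *ᵥ x = lam • x) :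
    G.lapMatrix ℝ *ᵥ c.signedAbs x = lam • c.signedAbs x := by
  have hL := (posSemidef_lapMatrix ℝ G).isHermitian
  refine hL.mulVec_eq_smul_of_dotProduct_mulVec_eq hlam <|
    le_antisymm (hL.dotProduct_mulVec_le hlam _) ?_
  calc lam * (c.signedAbs x ⬝ᵥ c.signedAbs x) = x ⬝ᵥ (G.lapMatrix ℝ *ᵥ x) := by
        rw [dotProduct_signedAbs_self, hx, dotProduct_smul, smul_eq_mul]
    _ ≤ _ := c.dotProduct_lapMatrix_mulVec_le_signedAbs x

lemma eq_zero_of_adj_of_lapMatrix_mulVec_eq_smul {y : V → ℝ} (hy : ∀ v, 0 ≤ c.sign v * y v)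
    (heig : G.lapMatrix ℝ *ᵥ y = lam • y) {u v : V} (huv : G.Adj u v) (hu : y u = 0) :
    y v = 0 := by
  have hsum : ∑ w ∈ G.neighborFinset u, y w = 0 := by
    simpa [lapMatrix_mulVec_apply, hu] using congrFun heig u
  have hsum_sign : ∑ w ∈ G.neighborFinset u, c.sign w * y w = 0 := by
    calc ∑ w ∈ G.neighborFinset u, c.sign w * y w
        = ∑ w ∈ G.neighborFinset u, -c.sign u * y w :=
          Finset.sum_congr rfl fun w hw => by
            rw [c.sign_eq_neg_of_adj ((G.mem_neighborFinset u w).1 hw)]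
      _ = 0 := by rw [← Finset.mul_sum, hsum, mul_zero]
  have hv := (Finset.sum_eq_zero_iff_of_nonneg fun w _ => hy w).1 hsum_sign v
    ((G.mem_neighborFinset u v).2 huv)
  exact (mul_eq_zero.1 hv).resolve_left (c.sign_ne_zero v)

end Coloring

lemma Connected.eq_zero_of_lapMatrix_mulVec_eq_smul [Fintype V] [DecidableEq V]
    [DecidableRel G.Adj] (hconn : G.Connected) (c : G.Coloring (Fin 2)) {lam : ℝ} {y : V → ℝ}
    (hy : ∀ v, 0 ≤ c.sign v * y v) (heig : G.lapMatrix ℝ *ᵥ y = lam • y) {u : V}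
    (hu : y u = 0) : y = 0 :=
  funext fun v => (hconn.preconnected u v).imp_of_forall_adj
    (fun _ _ h => c.eq_zero_of_adj_of_lapMatrix_mulVec_eq_smul hy heig h) hu

lemma dotProduct_lapMatrix_mulVec_pendant [Fintype V] [DecidableEq V] [DecidableRel G.Adj]
    {G' : SimpleGraph (Option V)} [DecidableRel G'.Adj] {v₀ : V}
    (hG' : ∀ a b : Option V, G'.Adj a b ↔
      ((∃ u v : V, a = some u ∧ b = some v ∧ G.Adj u v) ∨
        (a = none ∧ b = some v₀) ∨ (a = some v₀ ∧ b = none)))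
    (x : V → ℝ) :
    (fun a => a.elim 0 x) ⬝ᵥ (G'.lapMatrix ℝ *ᵥ fun a => a.elim 0 x) =
      x ⬝ᵥ (G.lapMatrix ℝ *ᵥ x) + x v₀ ^ 2 := by
  rw [dotProduct_lapMatrix_mulVec, dotProduct_lapMatrix_mulVec]
  simp only [hG', exists_and_left, Fintype.sum_option, reduceCtorEq, false_and, exists_false,
    and_false, and_true, false_or, Option.elim_none, sub_zero, Option.some.injEq, exists_eq_left',
    or_false, Option.elim_some, Finset.sum_add_distrib, Finset.sum_ite_eq', Finset.mem_univ,
    ↓reduceIte, true_and, zero_sub, even_two, Even.neg_pow]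
  ring

end SimpleGraph

theorem stmt_4 {V : Type*} [Fintype V] [DecidableEq V]
    (G : SimpleGraph V) [DecidableRel G.Adj]
    (hconn : G.Connected) (hbip : G.Colorable 2)
    (v₀ : V)
    (G' : SimpleGraph (Option V)) [DecidableRel G'.Adj]
    (hG' : ∀ a b : Option V, G'.Adj a b ↔
      ((∃ u v : V, a = some u ∧ b = some v ∧ G.Adj u v) ∨
        (a = none ∧ b = some v₀) ∨ (a = some v₀ ∧ b = none)))
    (lam lam' : ℝ)
    (hlam : IsGreatest (spectrum ℝ (G.lapMatrix ℝ)) lam)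
    (hlam' : IsGreatest (spectrum ℝ (G'.lapMatrix ℝ)) lam') :
    lam' > lam := by
  obtain ⟨c⟩ := hbip
  obtain ⟨x, hx0, hx⟩ := exists_mulVec_eq_smul_of_mem_spectrum hlam.1
  set y := c.signedAbs x
  have hy : G.lapMatrix ℝ *ᵥ y = lam • y := c.lapMatrix_mulVec_signedAbs_eq_smul hlam.2 hx
  have hy0 : y ≠ 0 := c.signedAbs_eq_zero_iff.not.2 hx0
  have hyv₀ : y v₀ ≠ 0 := fun h => hy0 <|
    hconn.eq_zero_of_lapMatrix_mulVec_eq_smul c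
      (fun v => (c.sign_mul_signedAbs x v).symm ▸ abs_nonneg _) hy h
  have hyy : 0 < y ⬝ᵥ y := by simpa using dotProduct_star_self_pos_iff.2 hy0
  set z : Option V → ℝ := fun a => a.elim 0 y
  have hzz : z ⬝ᵥ z = y ⬝ᵥ y := by simp [z, dotProduct, Fintype.sum_option]
  have hlt : lam * (y ⬝ᵥ y) < lam' * (y ⬝ᵥ y) := calc
    lam * (y ⬝ᵥ y) < y ⬝ᵥ (G.lapMatrix ℝ *ᵥ y) + y v₀ ^ 2 := by
      rw [hy, dotProduct_smul, smul_eq_mul]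
      exact lt_add_of_pos_right _ (sq_pos_of_ne_zero hyv₀)
    _ = z ⬝ᵥ (G'.lapMatrix ℝ *ᵥ z) := (G.dotProduct_lapMatrix_mulVec_pendant hG' y).symm
    _ ≤ lam' * (z ⬝ᵥ z) :=
      (G'.posSemidef_lapMatrix ℝ).isHermitian.dotProduct_mulVec_le hlam'.2 z
    _ = lam' * (y ⬝ᵥ y) := by rw [hzz]
  exact lt_of_mul_lt_mul_right hlt hyy.le
end

section
/- Let G be a finite simple connected graph on n ≥ 2 vertices with maximum vertex degree Δ(G). Then λ(G) ≥ Δ(G) + 1, with equality if and only if Δ(G) = n - 1. -/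
/-!
Take a vertex `v` of maximum degree `Δ` and the vector `x` with `x v = Δ`, `x = -1` on the
neighbours of `v` and `0` elsewhere. The Laplacian quadratic form is a sum of `(x i - x j)²` over
edges; the `Δ` edges at `v` alone contribute `Δ (Δ + 1)² = (Δ + 1) ‖x‖²`, so the Rayleigh quotient
gives `λ ≥ Δ + 1`. If `Δ + 1 < n`, connectivity yields an edge from a neighbour of `v` to a vertex
outside the closed neighbourhood, which contributes `1` more, so `λ > Δ + 1`. Conversely
`n I - L(G) = L(Gᶜ) + J` is positive semidefinite, so `λ ≤ n`, which is `Δ + 1` when `Δ = n - 1`.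
-/

open Matrix Finset

namespace Matrix

variable {n : Type*} [Fintype n] [DecidableEq n]

theorem posSemidef_smul_one_sub_iff {A : Matrix n n ℝ} (hA : A.IsHermitian) (c : ℝ) :
    (c • (1 : Matrix n n ℝ) - A).PosSemidef ↔ ∀ μ ∈ spectrum ℝ A, μ ≤ c := by
  have hM : (c • (1 : Matrix n n ℝ) - A).IsHermitian :=
    ((isHermitian_one).smul (IsSelfAdjoint.all c)).sub hA
  rw [posSemidef_iff_isHermitian_and_spectrum_nonneg, and_iff_right hM,
    ← Algebra.algebraMap_eq_smul_one, ← spectrum.singleton_sub_eq]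
  simp [Set.subset_def]

theorem IsHermitian.dotProduct_mulVec_le_of_spectrum_le {A : Matrix n n ℝ} (hA : A.IsHermitian)
    {c : ℝ} (hc : ∀ μ ∈ spectrum ℝ A, μ ≤ c) (x : n → ℝ) :
    x ⬝ᵥ A *ᵥ x ≤ c * (x ⬝ᵥ x) := by
  have h := ((posSemidef_smul_one_sub_iff hA c).2 hc).dotProduct_mulVec_nonneg x
  rw [star_trivial, sub_mulVec, dotProduct_sub, smul_mulVec, one_mulVec, dotProduct_smul,
    smul_eq_mul] at h
  linarith

end Matrix

namespace SimpleGraph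

variable {V : Type*} [Fintype V] [DecidableEq V] (G : SimpleGraph V) [DecidableRel G.Adj]

theorem card_smul_one_sub_lapMatrix :
    (Fintype.card V : ℝ) • (1 : Matrix V V ℝ) - G.lapMatrix ℝ
      = Gᶜ.lapMatrix ℝ + vecMulVec 1 1 := by
  ext i j
  rcases eq_or_ne i j with rfl | hij
  · have : (Gᶜ.degree i : ℝ) = Fintype.card V - 1 - G.degree i := by
      rw [degree_compl, Nat.cast_sub (Nat.le_sub_one_of_lt (G.degree_lt_card_verts i)),
        Nat.cast_pred (Fintype.card_pos_iff.2 ⟨i⟩)]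
    simp [lapMatrix, degMatrix, this]
    ring
  · by_cases hadj : G.Adj i j <;> simp [lapMatrix, degMatrix, hij, hadj]

theorem spectrum_lapMatrix_le_card : ∀ μ ∈ spectrum ℝ (G.lapMatrix ℝ), μ ≤ Fintype.card V := by
  rw [← posSemidef_smul_one_sub_iff (G.isHermitian_lapMatrix ℝ), card_smul_one_sub_lapMatrix]
  exact (posSemidef_lapMatrix ℝ Gᶜ).add (by simpa using posSemidef_vecMulVec_self_star (1 : V → ℝ))

theorem lapMatrix_quadForm_eq_star_add (v : V) (x : V → ℝ) :
    x ⬝ᵥ G.lapMatrix ℝ *ᵥ x = ∑ j, (if G.Adj v j then (x v - x j) ^ 2 else 0) +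
      (∑ i ∈ univ.erase v, ∑ j ∈ univ.erase v,
        if G.Adj i j then (x i - x j) ^ 2 else 0) / 2 := by
  set f : V → V → ℝ := fun i j => if G.Adj i j then (x i - x j) ^ 2 else 0
  have hsymm : ∀ i j, f i j = f j i := fun i j => by
    simp only [f, G.adj_comm i j]
    split_ifs <;> ring
  have hdiag : f v v = 0 := if_neg (G.irrefl (v := v))
  rw [← toLinearMap₂'_apply', lapMatrix_toLinearMap₂']
  change (∑ i, ∑ j, f i j) / 2 = ∑ j, f v j + (∑ i ∈ univ.erase v, ∑ j ∈ univ.erase v, f i j) / 2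
  have hsplit : ∀ i, ∑ j, f i j = f i v + ∑ j ∈ univ.erase v, f i j :=
    fun i => (add_sum_erase _ _ (mem_univ v)).symm
  rw [sum_congr rfl fun i _ => hsplit i, sum_add_distrib,
    ← add_sum_erase _ (fun i => ∑ j ∈ univ.erase v, f i j) (mem_univ v),
    sum_erase _ hdiag, sum_congr rfl fun i _ => hsymm i v]
  ring

def starVector (v : V) : V → ℝ := fun i => if i = v then G.degree v else if G.Adj v i then -1 else 0

variable {G}

@[simp]
theorem starVector_self (v : V) : G.starVector v v = G.degree v := if_pos rfl

theorem starVector_of_adj {v i : V} (h : G.Adj v i) : G.starVector v i = -1 := by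
  simp [starVector, h.ne', h]

theorem starVector_of_ne_of_not_adj {v i : V} (hi : i ≠ v) (h : ¬G.Adj v i) :
    G.starVector v i = 0 := by
  simp [starVector, hi, h]

theorem starVector_dotProduct_self (v : V) :
    G.starVector v ⬝ᵥ G.starVector v = G.degree v * (G.degree v + 1) := by
  have hsq : ∀ i ∈ univ.erase v, G.starVector v i * G.starVector v i =
      if G.Adj v i then 1 else 0 := fun i hi => by
    by_cases h : G.Adj v i
    · simp [starVector_of_adj h, h]
    · simp [starVector_of_ne_of_not_adj (ne_of_mem_erase hi) h, h]
  rw [dotProduct, ← add_sum_erase _ _ (mem_univ v), sum_congr rfl hsq,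
    sum_erase (f := fun i => if G.Adj v i then (1 : ℝ) else 0) _ (if_neg (G.irrefl (v := v))),
    ← degree_eq_sum_if_adj, starVector_self]
  ring

theorem starVector_dotProduct_self_pos {v : V} (hv : 0 < G.degree v) :
    0 < G.starVector v ⬝ᵥ G.starVector v := by
  rw [starVector_dotProduct_self]
  positivity

theorem sum_adj_sq_starVector (v : V) :
    ∑ j, (if G.Adj v j then (G.starVector v v - G.starVector v j) ^ 2 else 0)
      = (G.degree v + 1) * (G.starVector v ⬝ᵥ G.starVector v) := by
  have hterm : ∀ j, (if G.Adj v j then (G.starVector v v - G.starVector v j) ^ 2 else 0)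
      = (if G.Adj v j then 1 else 0) * ((G.degree v : ℝ) + 1) ^ 2 := fun j => by
    split_ifs with h
    · simp [starVector_of_adj h]
    · simp
  rw [sum_congr rfl fun j _ => hterm j, ← sum_mul, ← degree_eq_sum_if_adj,
    starVector_dotProduct_self]
  ring

theorem degree_add_one_mul_le_quadForm_starVector (v : V) :
    (G.degree v + 1) * (G.starVector v ⬝ᵥ G.starVector v)
      ≤ G.starVector v ⬝ᵥ G.lapMatrix ℝ *ᵥ G.starVector v := by
  rw [lapMatrix_quadForm_eq_star_add G v, sum_adj_sq_starVector, le_add_iff_nonneg_right]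
  refine div_nonneg (sum_nonneg fun i _ => sum_nonneg fun j _ => ?_) zero_le_two
  split_ifs <;> positivity

theorem degree_add_one_mul_lt_quadForm_starVector {v u w : V} (hvu : G.Adj v u)
    (huw : G.Adj u w) (hwv : w ≠ v) (hvw : ¬G.Adj v w) :
    (G.degree v + 1) * (G.starVector v ⬝ᵥ G.starVector v)
      < G.starVector v ⬝ᵥ G.lapMatrix ℝ *ᵥ G.starVector v := by
  set x := G.starVector v
  set f : V → V → ℝ := fun i j => if G.Adj i j then (x i - x j) ^ 2 else 0
  have hf : ∀ i j, 0 ≤ f i j := fun i j => by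
    simp only [f]
    split_ifs <;> positivity
  have hfuw : f u w = 1 := by
    simp [f, huw, x, starVector_of_adj hvu, starVector_of_ne_of_not_adj hwv hvw]
  have hrest : f u w ≤ ∑ i ∈ univ.erase v, ∑ j ∈ univ.erase v, f i j :=
    (single_le_sum (fun j _ => hf u j) (mem_erase.2 ⟨hwv, mem_univ w⟩)).trans
      (single_le_sum (fun i _ => sum_nonneg fun j _ => hf i j)
        (mem_erase.2 ⟨hvu.ne', mem_univ u⟩))
  rw [lapMatrix_quadForm_eq_star_add G v, sum_adj_sq_starVector, lt_add_iff_pos_right]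
  change 0 < (∑ i ∈ univ.erase v, ∑ j ∈ univ.erase v, f i j) / 2
  linarith

theorem degree_add_one_le_of_spectrum_le {v : V} (hv : 0 < G.degree v) {c : ℝ}
    (hc : ∀ μ ∈ spectrum ℝ (G.lapMatrix ℝ), μ ≤ c) : G.degree v + 1 ≤ c :=
  le_of_mul_le_mul_right ((degree_add_one_mul_le_quadForm_starVector v).trans
    ((G.isHermitian_lapMatrix ℝ).dotProduct_mulVec_le_of_spectrum_le hc _))
    (starVector_dotProduct_self_pos hv)

theorem degree_add_one_lt_of_spectrum_le {v u w : V} (hvu : G.Adj v u) (huw : G.Adj u w)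
    (hwv : w ≠ v) (hvw : ¬G.Adj v w) {c : ℝ}
    (hc : ∀ μ ∈ spectrum ℝ (G.lapMatrix ℝ), μ ≤ c) : G.degree v + 1 < c :=
  lt_of_mul_lt_mul_right
    ((degree_add_one_mul_lt_quadForm_starVector hvu huw hwv hvw).trans_le
      ((G.isHermitian_lapMatrix ℝ).dotProduct_mulVec_le_of_spectrum_le hc _))
    (starVector_dotProduct_self_pos ((G.degree_pos_iff_exists_adj v).2 ⟨u, hvu⟩)).le

theorem Connected.exists_adj_adj_of_degree_add_one_lt (hG : G.Connected) {v : V}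
    (h : G.degree v + 1 < Fintype.card V) :
    ∃ u w, G.Adj v u ∧ G.Adj u w ∧ w ≠ v ∧ ¬G.Adj v w := by
  obtain ⟨w₀, hw₀⟩ : ∃ w, w ∉ insert v (G.neighborFinset v) := by
    by_contra! hall
    have := card_le_card fun a (_ : a ∈ univ) => hall a
    rw [card_univ, card_insert_of_notMem (by simp), card_neighborFinset_eq_degree] at this
    omega
  obtain ⟨d, -, hd₁, hd₂⟩ := (hG.preconnected v w₀).some.exists_boundary_dart
    (insert v (G.neighborFinset v) : Set V) (by simp) (by simpa using hw₀)
  simp only [Set.mem_insert_iff, mem_coe, mem_neighborFinset, not_or] at hd₁ hd₂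
  rcases hd₁ with hd₁ | hd₁
  · exact absurd (hd₁ ▸ d.adj) hd₂.2
  · exact ⟨d.fst, d.snd, hd₁, d.adj, hd₂.1, hd₂.2⟩

end SimpleGraph

theorem stmt_6 {V : Type*} [Fintype V] [DecidableEq V]
    (G : SimpleGraph V) [DecidableRel G.Adj]
    (hcard : 2 ≤ Fintype.card V) (hconn : G.Connected)
    (lam : ℝ) (hlam : IsGreatest (spectrum ℝ (G.lapMatrix ℝ)) lam) :
    lam ≥ G.maxDegree + 1 ∧
      (lam = G.maxDegree + 1 ↔ G.maxDegree = Fintype.card V - 1) := by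
  have : Nontrivial V := Fintype.one_lt_card_iff_nontrivial.1 hcard
  obtain ⟨v, hv⟩ := G.exists_maximal_degree_vertex
  have hlower : (G.maxDegree : ℝ) + 1 ≤ lam := hv ▸
    SimpleGraph.degree_add_one_le_of_spectrum_le
      (hconn.preconnected.degree_pos_of_nontrivial v) hlam.2
  refine ⟨hlower, fun heq => ?_, fun hΔ => ?_⟩
  · by_contra hΔ
    obtain ⟨u, w, hvu, huw, hwv, hvw⟩ :=
      hconn.exists_adj_adj_of_degree_add_one_lt (v := v)
        (by have := G.maxDegree_lt_card_verts; omega)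
    have := SimpleGraph.degree_add_one_lt_of_spectrum_le hvu huw hwv hvw hlam.2
    rw [← hv] at this
    linarith
  · have hn : (Fintype.card V : ℝ) = G.maxDegree + 1 := by
      rw [hΔ, Nat.cast_pred (by omega)]
      ring
    exact le_antisymm (hn ▸ G.spectrum_lapMatrix_le_card lam hlam.1) hlower
end

section
/- Let G be a graph obtained from a bipartite graph H by attaching a path v = v_0 v_1 ⋯ v_k at a vertex v of H, let X be a positive eigenvector of B(G) = D(G) + A(G) corresponding to its largest eigenvalue μ, and define f_1(y) = y - 1, f_i(y) = y - 2 - 1/f_{i-1}(y). Then X(v_i) = f_{k-i}(μ) · X(v_{i+1}) for 0 ≤ i ≤ k - 1; moreover, if μ ≥ 4 then X(v_i) > X(v_{i+1}) for 0 ≤ i ≤ k - 1. -/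
open Matrix

lemma paperF_gt_one {mu : ℝ} (hmu : 4 ≤ mu) : ∀ n, 1 < paperF n mu := by
  intro n
  induction n with
  | zero => simp only [paperF]; linarith
  | succ m ih =>
    simp only [paperF]
    have h0 : 0 < paperF m mu := by linarith
    have : 1 / paperF m mu < 1 := by
      rw [div_lt_one h0]; exact ih
    have : 0 < 1 / paperF m mu := by positivity
    linarith

/-- `G` is obtained from a bipartite graph by attaching a pendant path
`p 0 = v, p 1, …, p k` at the vertex `v = p 0`. -/
theorem stmt_9 {V : Type*} [Fintype V] [DecidableEq V]
    (G : SimpleGraph V) [DecidableRel G.Adj]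
    (hconn : G.Connected) (hbip : G.Colorable 2)
    (k : ℕ) (hk : 1 ≤ k) (p : ℕ → V)
    (hinj : ∀ i j : ℕ, i ≤ k → j ≤ k → p i = p j → i = j)
    (hadj01 : G.Adj (p 0) (p 1))
    (hmid : ∀ i : ℕ, 1 ≤ i → i ≤ k - 1 →
      G.neighborSet (p i) = {p (i - 1), p (i + 1)})
    (hend : G.neighborSet (p k) = {p (k - 1)})
    (mu : ℝ)
    (hmu : IsGreatest (spectrum ℝ (G.degMatrix ℝ + G.adjMatrix ℝ)) mu)
    (X : V → ℝ) (hXpos : ∀ v, 0 < X v)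
    (heig : (G.degMatrix ℝ + G.adjMatrix ℝ).mulVec X = mu • X) :
    (∀ i : ℕ, i ≤ k - 1 → X (p i) = paperF (k - i - 1) mu * X (p (i + 1))) ∧
      (4 ≤ mu → ∀ i : ℕ, i ≤ k - 1 → X (p i) > X (p (i + 1))) := by
  classical
  have key : ∀ w, (G.degree w : ℝ) * X w + ∑ u ∈ G.neighborFinset w, X u = mu * X w := by
    intro w
    have h := congrFun heig w
    rwa [add_mulVec, Pi.add_apply, SimpleGraph.degMatrix_mulVec_apply,
      SimpleGraph.adjMatrix_mulVec_apply, Pi.smul_apply, smul_eq_mul] at h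
  -- neighbor finsets
  have hfinend : G.neighborFinset (p k) = {p (k - 1)} := by
    ext u
    rw [SimpleGraph.mem_neighborFinset, ← SimpleGraph.mem_neighborSet, hend]
    simp
  have eqend : X (p (k - 1)) = (mu - 1) * X (p k) := by
    have h := key (p k)
    rw [hfinend, Finset.sum_singleton, SimpleGraph.degree, hfinend] at h
    simp only [Finset.card_singleton, Nat.cast_one] at h
    linarith
  have hfinmid : ∀ j : ℕ, 1 ≤ j → j ≤ k - 1 →
      G.neighborFinset (p j) = {p (j - 1), p (j + 1)} := by
    intro j h1 h2
    ext u
    rw [SimpleGraph.mem_neighborFinset, ← SimpleGraph.mem_neighborSet, hmid j h1 h2]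
    simp [Set.mem_insert_iff]
  have eqmid : ∀ j : ℕ, 1 ≤ j → j ≤ k - 1 →
      X (p (j - 1)) + X (p (j + 1)) = (mu - 2) * X (p j) := by
    intro j h1 h2
    have hne : p (j - 1) ≠ p (j + 1) := by
      intro he
      have := hinj (j - 1) (j + 1) (by omega) (by omega) he
      omega
    have h := key (p j)
    rw [hfinmid j h1 h2, Finset.sum_pair hne, SimpleGraph.degree, hfinmid j h1 h2,
      Finset.card_pair hne] at h
    push_cast at h
    linarith
  -- main claim by downward induction
  have main : ∀ d : ℕ, ∀ i : ℕ, i ≤ k - 1 → k - 1 - i = d →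
      X (p i) = paperF (k - i - 1) mu * X (p (i + 1)) ∧ 0 < paperF (k - i - 1) mu := by
    intro d
    induction d with
    | zero =>
      intro i hi hd
      have hik : i = k - 1 := by omega
      have h1 : k - i - 1 = 0 := by omega
      have h2 : i + 1 = k := by omega
      have h3 : k - 1 = i := hik.symm
      rw [h1, h2]
      simp only [paperF]
      rw [h3] at eqend
      refine ⟨eqend, ?_⟩
      nlinarith [hXpos (p i), hXpos (p k), eqend]
    | succ d ih =>
      intro i hi hd
      obtain ⟨hX1, hf⟩ := ih (i + 1) (by omega) (by omega)
      have hmi : X (p i) + X (p (i + 1 + 1)) = (mu - 2) * X (p (i + 1)) := by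
        have h := eqmid (i + 1) (by omega) (by omega)
        simpa using h
      have hidx : k - (i + 1) - 1 = k - i - 2 := by omega
      rw [hidx] at hX1 hf
      have hidx2 : k - i - 1 = (k - i - 2) + 1 := by omega
      rw [hidx2]
      set f := paperF (k - i - 2) mu with hfdef
      have hf' : f ≠ 0 := ne_of_gt hf
      have hmul : paperF ((k - i - 2) + 1) mu * X (p (i + 1))
          = (mu - 2) * X (p (i + 1)) - X (p (i + 1 + 1)) := by
        simp only [paperF, ← hfdef]
        rw [hX1]
        field_simp
      constructor
      · rw [hmul]; linarith
      · have hXeq : X (p i) = paperF ((k - i - 2) + 1) mu * X (p (i + 1)) := by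
          rw [hmul]; linarith
        nlinarith [hXpos (p i), hXpos (p (i + 1)), hXeq]
  constructor
  · intro i hi
    exact (main (k - 1 - i) i hi rfl).1
  · intro hmu4 i hi
    have h1 := (main (k - 1 - i) i hi rfl).1
    have h2 := paperF_gt_one hmu4 (k - i - 1)
    have := hXpos (p (i + 1))
    nlinarith
end

section
/- Let g be even, k = g/2, and n = g + k. Let U_{n,g} be the unicyclic graph obtained from a cycle on g vertices {1,…,g} by attaching a path on n - g vertices to vertex g. Then the largest eigenvalue of B(U_{n,g}) = D + A satisfies μ(U_{n,g}) ≥ 4.5. -/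
open Matrix

/-- The unicyclic graph `U_{n,g}` on vertices `0, …, n-1` (vertex `i` here is
vertex `i+1` of the paper): a cycle on `0, …, g-1` together with a pendant path
`g-1, g, …, n-1` attached at the cycle vertex `g-1`. -/
def Ung (n g : ℕ) : SimpleGraph (Fin n) :=
  SimpleGraph.fromRel (fun a b => b.val = a.val + 1 ∨ (a.val = 0 ∧ b.val = g - 1))

instance (n g : ℕ) : DecidableRel (Ung n g).Adj := fun a b =>
  decidable_of_iff _ (SimpleGraph.fromRel_adj _ a b).symm

/-!
Test the Rayleigh quotient of `D + A` on the vector that is `2 ^ (k - d)` at distance `d` from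
the vertex `g` where the path is attached. Every edge joins two values in ratio `2`, so the edge
`{2 ^ (t + 1), 2 ^ t}` contributes `9 * 4 ^ t`. The graph splits into three arms of `k` edges
issuing from that vertex (the two halves of the cycle and the path), each contributing
`9 * (1 + 4 + ⋯ + 4 ^ (k - 1))`, while the squared norm is `6 * (1 + 4 + ⋯ + 4 ^ (k - 1))`.
The quotient is therefore exactly `27 / 6 = 9 / 2`.
-/

open Finset

open scoped MatrixOrder

theorem Matrix.IsHermitian.dotProduct_mulVec_le_of_spectrum_le_s10 {n : Type*} [Fintype n]
    [DecidableEq n] {A : Matrix n n ℝ} (hA : A.IsHermitian) {r : ℝ} (h : ∀ a ∈ spectrum ℝ A, a ≤ r)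
    (x : n → ℝ) : x ⬝ᵥ A *ᵥ x ≤ r * (x ⬝ᵥ x) := by
  have hle : A ≤ algebraMap ℝ _ r := le_algebraMap_of_spectrum_le h hA.isSelfAdjoint
  have := (le_iff.mp hle).dotProduct_mulVec_nonneg x
  simpa [sub_mulVec, Algebra.algebraMap_eq_smul_one, smul_mulVec, dotProduct_smul] using this

namespace SimpleGraph

variable {V : Type*} [Fintype V]

theorem sum_sum_ite_adj_of_orientation {R : Type*} [AddCommMonoid R] (G : SimpleGraph V)
    [DecidableRel G.Adj] (r : V → V → Prop) [DecidableRel r] (hr : ∀ a b, r a b → ¬ r b a)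
    (hG : ∀ a b, G.Adj a b ↔ r a b ∨ r b a) (f : V → V → R) (hf : ∀ a b, f a b = f b a) :
    ∑ a, ∑ b, (if G.Adj a b then f a b else 0) = 2 • ∑ a, ∑ b, if r a b then f a b else 0 := by
  have hsplit : ∀ a b, (if G.Adj a b then f a b else 0) =
      (if r a b then f a b else 0) + if r b a then f b a else 0 := by
    intro a b
    by_cases hab : r a b
    · simp [hG, hab, hr a b hab]
    · by_cases hba : r b a <;> simp [hG, hab, hba, hf a b]
  simp_rw [hsplit, sum_add_distrib]
  rw [sum_comm (f := fun a b => if r b a then f b a else 0), two_nsmul]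

theorem dotProduct_mulVec_degMatrix_add_adjMatrix {R : Type*} [Field R] [CharZero R]
    (G : SimpleGraph V) [DecidableRel G.Adj] [DecidableEq V] (x : V → R) :
    x ⬝ᵥ (G.degMatrix R + G.adjMatrix R) *ᵥ x =
      (∑ i, ∑ j, if G.Adj i j then (x i + x j) ^ 2 else 0) / 2 := by
  simp_rw [add_mulVec, dotProduct_add, dotProduct_mulVec_degMatrix,
    dotProduct_mulVec_adjMatrix, degree_eq_sum_if_adj, sum_mul, ite_mul, one_mul, zero_mul,
    ← sum_add_distrib, ite_add_ite, add_zero]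
  rw [← add_self_div_two (∑ i : V, ∑ j : V, _)]
  conv_lhs => enter [1, 2, 2, i, 2, j]; rw [if_congr (G.adj_comm i j) rfl rfl]
  conv_lhs => enter [1, 2]; rw [sum_comm]
  simp_rw [← sum_add_distrib, ite_add_ite]
  congr 2 with i
  congr 2 with j
  ring_nf

end SimpleGraph

theorem Fin.sum_univ_ite_val_eq {R : Type*} [AddCommMonoid R] (n a : ℕ) (f : ℕ → R) :
    ∑ b : Fin n, (if (b : ℕ) = a then f b else 0) = if a < n then f a else 0 := by
  rw [Fin.sum_univ_eq_sum_range (fun b => if b = a then f b else 0), sum_ite_eq']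
  simp only [mem_range]

theorem sum_sum_ite_succ_or_chord {R : Type*} [AddCommMonoid R] {n g : ℕ} (hg : 3 ≤ g) (hgn : g ≤ n)
    (F : ℕ → ℕ → R) :
    ∑ a : Fin n, ∑ b : Fin n,
        (if (b : ℕ) = a + 1 ∨ ((a : ℕ) = 0 ∧ (b : ℕ) = g - 1) then F a b else 0) =
      ∑ i ∈ range (n - 1), F i (i + 1) + F 0 (g - 1) := by
  have hsplit : ∀ a b : Fin n,
      (if (b : ℕ) = a + 1 ∨ ((a : ℕ) = 0 ∧ (b : ℕ) = g - 1) then F a b else 0) =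
        (if (b : ℕ) = a + 1 then F a b else 0) +
          if (b : ℕ) = g - 1 then (if (a : ℕ) = 0 then F a b else 0) else 0 := by
    intro a b
    -- `3 ≤ g` keeps the chord `{0, g - 1}` apart from the path edge `{0, 1}`
    split_ifs <;> first | (exfalso; omega) | simp
  have hpath : ∑ a : Fin n, ∑ b : Fin n, (if (b : ℕ) = a + 1 then F a b else 0) =
      ∑ i ∈ range (n - 1), F i (i + 1) := by
    simp_rw [Fin.sum_univ_ite_val_eq _ _ (F _)]
    rw [Fin.sum_univ_eq_sum_range (fun a => if a + 1 < n then F a (a + 1) else 0), ← sum_filter]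
    congr 1
    ext i
    simp only [mem_filter, mem_range]
    omega
  have hcycle : ∑ a : Fin n, ∑ b : Fin n,
      (if (b : ℕ) = g - 1 then (if (a : ℕ) = 0 then F a b else 0) else 0) = F 0 (g - 1) := by
    have inner : ∀ a : Fin n, ∑ b : Fin n,
        (if (b : ℕ) = g - 1 then (if (a : ℕ) = 0 then F a b else 0) else 0) =
          if (a : ℕ) = 0 then F a (g - 1) else 0 := fun a => by
      rw [Fin.sum_univ_ite_val_eq _ _ (fun b => if (a : ℕ) = 0 then F a b else 0),
        if_pos (by omega)]
    rw [sum_congr rfl fun a _ => inner a, Fin.sum_univ_ite_val_eq _ _ (fun a => F a (g - 1)),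
      if_pos (by omega)]
  simp_rw [hsplit, sum_add_distrib, hpath, hcycle]

theorem dotProduct_mulVec_Ung {n g : ℕ} (hg : 3 ≤ g) (hgn : g ≤ n) (X : ℕ → ℝ) :
    (fun v : Fin n => X v) ⬝ᵥ ((Ung n g).degMatrix ℝ + (Ung n g).adjMatrix ℝ) *ᵥ
        (fun v : Fin n => X v) =
      ∑ i ∈ range (n - 1), (X i + X (i + 1)) ^ 2 + (X 0 + X (g - 1)) ^ 2 := by
  have hsum : ∑ a : Fin n, ∑ b : Fin n,
      (if (Ung n g).Adj a b then (X a + X b) ^ 2 else 0) =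
        2 • (∑ i ∈ range (n - 1), (X i + X (i + 1)) ^ 2 + (X 0 + X (g - 1)) ^ 2) :=
    (SimpleGraph.sum_sum_ite_adj_of_orientation _
      (fun a b : Fin n => (b : ℕ) = a + 1 ∨ ((a : ℕ) = 0 ∧ (b : ℕ) = g - 1))
      (fun a b h h' => by omega)
      (fun a b => by simp only [Ung, SimpleGraph.fromRel_adj]; omega)
      (fun a b : Fin n => (X a + X b) ^ 2) (fun a b => by ring)).trans
      (by rw [sum_sum_ite_succ_or_chord hg hgn (fun a b => (X a + X b) ^ 2)])
  rw [SimpleGraph.dotProduct_mulVec_degMatrix_add_adjMatrix, hsum, two_nsmul]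
  ring

/-- The paper's test vector for `k = m + 1`: `2 ^ (k - d)` at distance `d` from the hub `2 * m + 1`
(vertex `g` of the paper); `m` is the vertex opposite the hub on the cycle. -/
noncomputable def witness (m i : ℕ) : ℝ :=
  if i ≤ m then 2 ^ (m - i) else if i ≤ 2 * m + 1 then 2 ^ (i - m) else 2 ^ (3 * m + 2 - i)

namespace witness

variable {m j : ℕ}

theorem apply_sub (h : j ≤ m) : witness m (m - j) = 2 ^ j := by
  rw [witness, if_pos (by omega), Nat.sub_sub_self h]

theorem apply_add (h : j ≤ m + 1) : witness m (m + j) = 2 ^ j := by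
  unfold witness
  split_ifs <;> congr 1 <;> omega

theorem apply_path (h : j ≤ m + 1) : witness m (2 * m + 1 + j) = 2 ^ (m + 1 - j) := by
  unfold witness
  split_ifs <;> congr 1 <;> omega

end witness

theorem sq_two_pow (t : ℕ) : ((2 : ℝ) ^ t) ^ 2 = 4 ^ t := by
  rw [← pow_mul, mul_comm, pow_mul]; norm_num

theorem sq_two_pow_add_two_pow_succ (t : ℕ) : ((2 : ℝ) ^ t + 2 ^ (t + 1)) ^ 2 = 9 * 4 ^ t := by
  rw [← sq_two_pow, pow_succ]; ring

theorem sum_sq_witness (m : ℕ) :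
    ∑ i ∈ range (3 * m + 3), witness m i ^ 2 = 6 * ∑ t ∈ range (m + 1), (4 : ℝ) ^ t := by
  rw [show 3 * m + 3 = m + 1 + (m + 1) + (m + 1) by ring, sum_range_add, sum_range_add]
  have hleft : ∑ i ∈ range (m + 1), witness m i ^ 2 = ∑ t ∈ range (m + 1), (4 : ℝ) ^ t := by
    rw [← sum_range_reflect]
    refine sum_congr rfl fun j hj => ?_
    rw [Nat.add_sub_cancel, witness.apply_sub (mem_range_succ_iff.1 hj), sq_two_pow]
  have hright : ∑ j ∈ range (m + 1), witness m (m + 1 + j) ^ 2 =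
      4 * ∑ t ∈ range (m + 1), (4 : ℝ) ^ t := by
    rw [mul_sum]
    refine sum_congr rfl fun j hj => ?_
    rw [add_assoc, add_comm 1, witness.apply_add (Nat.succ_le_succ (mem_range_succ_iff.1 hj)),
      sq_two_pow, pow_succ, mul_comm]
  have hpath : ∑ j ∈ range (m + 1), witness m (m + 1 + (m + 1) + j) ^ 2 =
      ∑ t ∈ range (m + 1), (4 : ℝ) ^ t := by
    rw [← sum_range_reflect]
    refine sum_congr rfl fun j hj => ?_
    have hj : j ≤ m := mem_range_succ_iff.1 hj
    rw [show m + 1 + (m + 1) + (m + 1 - 1 - j) = 2 * m + 1 + (m - j + 1) by omega,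
      witness.apply_path (by omega), show m + 1 - (m - j + 1) = j by omega, sq_two_pow]
  rw [hleft, hright, hpath]
  ring

theorem sum_sq_witness_add_witness (m : ℕ) :
    ∑ i ∈ range (3 * m + 2), (witness m i + witness m (i + 1)) ^ 2 +
        (witness m 0 + witness m (2 * m + 1)) ^ 2 =
      27 * ∑ t ∈ range (m + 1), (4 : ℝ) ^ t := by
  rw [show 3 * m + 2 = m + (m + 1) + (m + 1) by ring, sum_range_add, sum_range_add]
  have hleft : ∑ i ∈ range m, (witness m i + witness m (i + 1)) ^ 2 =
      9 * ∑ t ∈ range m, (4 : ℝ) ^ t := by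
    rw [← sum_range_reflect, mul_sum]
    refine sum_congr rfl fun j hj => ?_
    have hj : j < m := mem_range.1 hj
    rw [show m - 1 - j = m - (j + 1) by omega, show m - (j + 1) + 1 = m - j by omega,
      witness.apply_sub hj, witness.apply_sub hj.le, add_comm, sq_two_pow_add_two_pow_succ]
  have hcycle : (witness m 0 + witness m (2 * m + 1)) ^ 2 = 9 * 4 ^ m := by
    have hopp : witness m 0 = 2 ^ m := by simpa using witness.apply_sub (le_refl m)
    have hhub : witness m (2 * m + 1) = 2 ^ (m + 1) := by
      simpa using witness.apply_path (m := m) (j := 0) (by omega)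
    rw [hopp, hhub, sq_two_pow_add_two_pow_succ]
  have hmid : ∑ j ∈ range (m + 1), (witness m (m + j) + witness m (m + j + 1)) ^ 2 =
      9 * ∑ t ∈ range (m + 1), (4 : ℝ) ^ t := by
    rw [mul_sum]
    refine sum_congr rfl fun j hj => ?_
    have hj : j ≤ m := mem_range_succ_iff.1 hj
    rw [add_assoc, witness.apply_add (by omega), witness.apply_add (by omega),
      sq_two_pow_add_two_pow_succ]
  have hpath : ∑ j ∈ range (m + 1),
      (witness m (m + (m + 1) + j) + witness m (m + (m + 1) + j + 1)) ^ 2 =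
        9 * ∑ t ∈ range (m + 1), (4 : ℝ) ^ t := by
    rw [← sum_range_reflect, mul_sum]
    refine sum_congr rfl fun j hj => ?_
    have hj : j ≤ m := mem_range_succ_iff.1 hj
    rw [show m + (m + 1) + (m + 1 - 1 - j) + 1 = 2 * m + 1 + (m - j + 1) by omega,
      show m + (m + 1) + (m + 1 - 1 - j) = 2 * m + 1 + (m - j) by omega,
      witness.apply_path (by omega), witness.apply_path (by omega),
      show m + 1 - (m - j) = j + 1 by omega, show m + 1 - (m - j + 1) = j by omega, add_comm,
      sq_two_pow_add_two_pow_succ]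
  rw [hmid, hpath, hleft, hcycle, sum_range_succ _ m]
  ring

theorem stmt_10 (g k n : ℕ) (hg : 3 ≤ g) (hgk : g = 2 * k) (hn : n = g + k)
    (mu : ℝ)
    (hmu : IsGreatest
      (spectrum ℝ ((Ung n g).degMatrix ℝ + (Ung n g).adjMatrix ℝ)) mu) :
    mu ≥ 4.5 := by
  obtain ⟨m, rfl⟩ : ∃ m, k = m + 1 := ⟨k - 1, by omega⟩
  have hherm : ((Ung n g).degMatrix ℝ + (Ung n g).adjMatrix ℝ).IsHermitian :=
    isHermitian_iff_isSymm.2 ((SimpleGraph.isSymm_degMatrix _ _).add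
      (SimpleGraph.isSymm_adjMatrix _))
  have hray := hherm.dotProduct_mulVec_le_of_spectrum_le_s10 (fun a ha => hmu.2 ha)
    (fun v : Fin n => witness m v)
  have hnorm : (fun v : Fin n => witness m v) ⬝ᵥ (fun v => witness m v) =
      6 * ∑ t ∈ range (m + 1), (4 : ℝ) ^ t := by
    simp only [dotProduct, ← sq]
    rw [Fin.sum_univ_eq_sum_range (fun i => witness m i ^ 2), show n = 3 * m + 3 by omega,
      sum_sq_witness]
  rw [dotProduct_mulVec_Ung hg (by omega), show n - 1 = 3 * m + 2 by omega,
    show g - 1 = 2 * m + 1 by omega, sum_sq_witness_add_witness, hnorm] at hray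
  have hpos : 0 < ∑ t ∈ range (m + 1), (4 : ℝ) ^ t := by positivity
  calc (4.5 : ℝ) = 9 / 2 := by norm_num
    _ ≤ mu := le_of_mul_le_mul_right (by linarith) hpos
end

section
/- Let G be a unicyclic graph on n vertices with girth g, with cycle vertices 1,…,g, and let l_i ≥ 0 be the number of vertices in the tree attached at cycle vertex i, so l_1 + ⋯ + l_g = n - g. Suppose at least two cycle vertices i satisfy l_i ≥ 1. If n ≥ 3g - 1, then there exist two distinct cycle vertices i, j with l_i ≥ 1, l_j ≥ 1, and l_i ≥ 2·d(i,j), where d(i,j) is the cyclic distance between i and j. -/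
/-!
Let `S` be the set of positive positions and send each `i ∈ S` to the next element of `S`
clockwise, at forward distance `dᵢ`. The arcs `[i, i + dᵢ)` are pairwise disjoint, so
`∑ dᵢ ≤ g`. If the conclusion failed, then `lᵢ < 2 cycDist i (next i) ≤ 2 dᵢ` for every
`i ∈ S`, whence `2g - 1 ≤ ∑ lᵢ ≤ 2 ∑ dᵢ - #S ≤ 2g - #S`, contradicting `#S ≥ 2`.
-/

/-- The cyclic distance between two vertices of a cycle of length `g`
(vertices labelled by `Fin g`). -/
def cycDist {g : ℕ} (i j : Fin g) : ℕ :=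
  min ((j.val + g - i.val) % g) ((i.val + g - j.val) % g)

open Finset

namespace Fin

variable {g : ℕ}

theorem cycDist_le_val_sub (i j : Fin g) : cycDist i j ≤ (j - i).val := by
  have hval : (j - i).val = (j.val + g - i.val) % g := by
    rw [Fin.val_sub]
    congr 1
    omega
  exact hval ▸ min_le_left _ _

theorem exists_next_of_one_lt_card (S : Finset (Fin g)) (hS : 1 < #S) :
    ∃ next : Fin g → Fin g, ∀ i ∈ S, next i ∈ S ∧ next i ≠ i ∧
      ∀ j ∈ S, j ≠ i → (next i - i).val ≤ (j - i).val := by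
  have hex : ∀ i, ∃ k, i ∈ S → k ∈ S.erase i ∧ ∀ j ∈ S.erase i, (k - i).val ≤ (j - i).val := by
    intro i
    by_cases hi : i ∈ S
    · have hne : (S.erase i).Nonempty := by
        rw [← card_pos, card_erase_of_mem hi]
        omega
      obtain ⟨k, hk, hmin⟩ := (S.erase i).exists_min_image (fun j => (j - i).val) hne
      exact ⟨k, fun _ => ⟨hk, hmin⟩⟩
    · exact ⟨i, fun h => absurd h hi⟩
  choose next hnext using hex
  refine ⟨next, fun i hi => ?_⟩
  obtain ⟨hmem, hmin⟩ := hnext i hi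
  exact ⟨mem_of_mem_erase hmem, ne_of_mem_erase hmem,
    fun j hj hji => hmin j (mem_erase.mpr ⟨hji, hj⟩)⟩

section

variable [NeZero g]

theorem sum_val_sub_next_le (S : Finset (Fin g)) (next : Fin g → Fin g)
    (hmin : ∀ i ∈ S, ∀ j ∈ S, j ≠ i → (next i - i).val ≤ (j - i).val) :
    ∑ i ∈ S, (next i - i).val ≤ g := by
  have harc_disjoint : ∀ i ∈ S, ∀ j ∈ S, ∀ x y : Fin g, x < next i - i → y ≤ x →
      i + x = j + y → i = j := by
    intro i hi j hj x y hx hyx hxy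
    have hj_eq : j - i = x - y := by
      rw [sub_eq_sub_iff_add_eq_add, add_comm x, hxy]
    by_contra hij
    have hfar := hmin i hi j hj (Ne.symm hij)
    rw [hj_eq, Fin.sub_val_of_le hyx] at hfar
    exact absurd hx (not_lt.mpr (hfar.trans (Nat.sub_le _ _)))
  calc ∑ i ∈ S, (next i - i).val
      = #(S.sigma fun i => Iio (next i - i)) := by simp only [card_sigma, Fin.card_Iio]
    _ ≤ #(univ : Finset (Fin g)) := by
        refine card_le_card_of_injOn (fun p => p.1 + p.2) (fun _ _ => mem_coe.mpr (mem_univ _)) ?_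
        rintro ⟨i, x⟩ hp ⟨j, y⟩ hq hxy
        simp only [coe_sigma, Set.mem_sigma_iff, mem_coe, mem_Iio] at hp hq hxy
        have hij : i = j := by
          rcases le_total y x with hyx | hxy'
          · exact harc_disjoint i hp.1 j hq.1 x y hp.2 hyx hxy
          · exact (harc_disjoint j hq.1 i hp.1 y x hq.2 hxy' hxy.symm).symm
        subst hij
        rw [add_left_cancel hxy]
    _ = g := by simp

end

theorem exists_two_mul_cycDist_le (l : Fin g → ℕ) (hsum : 2 * g - 1 ≤ ∑ i, l i)
    (htwo : ∃ i j : Fin g, i ≠ j ∧ 1 ≤ l i ∧ 1 ≤ l j) :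
    ∃ i j : Fin g, i ≠ j ∧ 1 ≤ l i ∧ 1 ≤ l j ∧ 2 * cycDist i j ≤ l i := by
  obtain ⟨a, b, hab, ha, hb⟩ := htwo
  have : NeZero g := ⟨(Fin.pos a).ne'⟩
  by_contra! hcon
  set S : Finset (Fin g) := {i | 1 ≤ l i}
  have hS : 1 < #S := one_lt_card.mpr ⟨a, by simpa [S] using ha, b, by simpa [S] using hb, hab⟩
  obtain ⟨next, hnext⟩ := exists_next_of_one_lt_card S hS
  have hgap : ∀ i ∈ S, l i + 1 ≤ 2 * (next i - i).val := by
    intro i hi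
    obtain ⟨hmem, hne, -⟩ := hnext i hi
    have hlt := hcon i (next i) hne.symm (by simpa [S] using hi) (by simpa [S] using hmem)
    have hdist := cycDist_le_val_sub i (next i)
    omega
  have hsumS : ∑ i ∈ S, l i = ∑ i, l i :=
    sum_filter_of_ne fun i _ hi => Nat.one_le_iff_ne_zero.mpr hi
  have hgaps := sum_val_sub_next_le S next fun i hi => (hnext i hi).2.2
  have hbound : ∑ i ∈ S, l i + #S ≤ 2 * ∑ i ∈ S, (next i - i).val := by
    calc ∑ i ∈ S, l i + #S = ∑ i ∈ S, (l i + 1) := by rw [sum_add_distrib, card_eq_sum_ones]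
      _ ≤ ∑ i ∈ S, 2 * (next i - i).val := sum_le_sum hgap
      _ = 2 * ∑ i ∈ S, (next i - i).val := (mul_sum _ _ _).symm
  omega

end Fin

theorem stmt_14_general (n g : ℕ) (hn : 3 * g - 1 ≤ n)
    (l : Fin g → ℕ) (hsum : ∑ i, l i = n - g)
    (htwo : ∃ i j : Fin g, i ≠ j ∧ 1 ≤ l i ∧ 1 ≤ l j) :
    ∃ i j : Fin g, i ≠ j ∧ 1 ≤ l i ∧ 1 ≤ l j ∧ 2 * cycDist i j ≤ l i :=
  Fin.exists_two_mul_cycDist_le l (by omega) htwo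

theorem stmt_14 (n g : ℕ) (hg : 3 ≤ g) (hng : g < n) (hn : 3 * g - 1 ≤ n)
    (l : Fin g → ℕ) (hsum : ∑ i, l i = n - g)
    (htwo : ∃ i j : Fin g, i ≠ j ∧ 1 ≤ l i ∧ 1 ≤ l j) :
    ∃ i j : Fin g, i ≠ j ∧ 1 ≤ l i ∧ 1 ≤ l j ∧ 2 * cycDist i j ≤ l i :=
  stmt_14_general n g hn l hsum htwo
end

section
/- Let g ≥ 4 be even and U_{n,g} the unicyclic graph formed by a g-cycle on vertices 1,…,g with a pendant path g, g+1, …, n attached at vertex g. Let X be a positive eigenvector of B(U_{n,g}) for its largest eigenvalue μ, and suppose μ ≥ 4.5. Then x_j > 2·x_{j+1} for g ≤ j ≤ n-1, x_g < 2·x_1, and x_j < 2·x_{j+1} for 1 ≤ j ≤ g/2 - 1. -/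
open Matrix

lemma ung_adj_iff (n g : ℕ) (hg : 4 ≤ g) (a b : Fin n) :
    (Ung n g).Adj a b ↔ (b.val = a.val + 1 ∨ a.val = b.val + 1 ∨
      (a.val = 0 ∧ b.val = g - 1) ∨ (b.val = 0 ∧ a.val = g - 1)) := by
  rw [Ung, SimpleGraph.fromRel_adj]
  simp only [ne_eq, Fin.ext_iff]
  omega

/-- Proposition 3.1(iv): in the paper's labelling (here shifted down by one),
if `μ ≥ 4.5` then `x_j > 2 x_{j+1}` for `g ≤ j ≤ n-1`, `x_g < 2 x_1`, and
`x_j < 2 x_{j+1}` for `1 ≤ j ≤ g/2 - 1`. -/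
theorem stmt_16 (n g : ℕ) (hg : 4 ≤ g) (heven : Even g) (hng : g < n)
    (mu : ℝ)
    (hmu : IsGreatest
      (spectrum ℝ ((Ung n g).degMatrix ℝ + (Ung n g).adjMatrix ℝ)) mu)
    (hmu45 : mu ≥ 4.5)
    (X : Fin n → ℝ) (hXpos : ∀ v, 0 < X v)
    (heig : ((Ung n g).degMatrix ℝ + (Ung n g).adjMatrix ℝ).mulVec X = mu • X) :
    (∀ (j : ℕ) (hj1 : g ≤ j) (hj2 : j ≤ n - 1),
        X ⟨j - 1, by omega⟩ > 2 * X ⟨j, by omega⟩) ∧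
      X ⟨g - 1, by omega⟩ < 2 * X ⟨0, by omega⟩ ∧
      (∀ (j : ℕ) (hj1 : 1 ≤ j) (hj2 : 2 * j + 2 ≤ g),
        X ⟨j - 1, by omega⟩ < 2 * X ⟨j, by omega⟩) := by
  obtain ⟨c, hc⟩ := heven
  -- the local eigen-equation at every vertex
  have hA : ∀ v : Fin n, ((Ung n g).degree v : ℝ) * X v
      + ∑ u ∈ (Ung n g).neighborFinset v, X u = mu * X v := by
    intro v
    have := congrFun heig v
    rwa [add_mulVec, Pi.add_apply, SimpleGraph.degMatrix_mulVec_apply,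
      SimpleGraph.adjMatrix_mulVec_apply, Pi.smul_apply, smul_eq_mul] at this
  have hnb : ∀ (v : Fin n) (S : Finset (Fin n)),
      (∀ u, (Ung n g).Adj v u ↔ u ∈ S) → (Ung n g).neighborFinset v = S :=
    fun v S h => Finset.ext fun u => ((Ung n g).mem_neighborFinset v u).trans (h u)
  -- ℕ-indexed vector
  set x : ℕ → ℝ := fun i => if h : i < n then X ⟨i, h⟩ else 0 with hxdef
  have hxeq : ∀ i (h : i < n), x i = X ⟨i, h⟩ := fun i h => dif_pos h
  have hx : ∀ i, i < n → 0 < x i := by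
    intro i h; rw [hxeq i h]; exact hXpos _
  -- two-neighbor vertices
  have htwo : ∀ (i a b : ℕ) (hi : i < n) (ha : a < n) (hb : b < n), a ≠ b →
      (∀ u : Fin n, (Ung n g).Adj ⟨i, hi⟩ u ↔ u.val = a ∨ u.val = b) →
      x a + x b = (mu - 2) * x i := by
    intro i a b hi ha hb hab hadj
    have hab' : (⟨a, ha⟩ : Fin n) ≠ ⟨b, hb⟩ := by simp [Fin.ext_iff, hab]
    have hS : (Ung n g).neighborFinset ⟨i, hi⟩ = {⟨a, ha⟩, ⟨b, hb⟩} := by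
      refine hnb _ _ fun u => (hadj u).trans ?_
      simp [Fin.ext_iff]
    have e := hA ⟨i, hi⟩
    rw [← SimpleGraph.card_neighborFinset_eq_degree, hS, Finset.card_pair hab',
      Finset.sum_pair hab'] at e
    rw [hxeq a ha, hxeq b hb, hxeq i hi]
    push_cast at e
    linarith
  -- equation at interior vertices (cycle interior or path interior)
  have hEint : ∀ i, 1 ≤ i → i + 1 < n → i ≠ g - 1 →
      x (i - 1) + x (i + 1) = (mu - 2) * x i := by
    intro i h1 h2 h3
    refine htwo i (i - 1) (i + 1) (by omega) (by omega) (by omega) (by omega) fun u => ?_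
    rw [ung_adj_iff n g hg]
    simp only [Fin.val_mk, true_and, and_true, false_and, and_false, false_or, or_false]
    omega
  -- equation at vertex 0
  have hE0 : x 1 + x (g - 1) = (mu - 2) * x 0 := by
    refine htwo 0 1 (g - 1) (by omega) (by omega) (by omega) (by omega) fun u => ?_
    rw [ung_adj_iff n g hg]
    simp only [Fin.val_mk, true_and, and_true, false_and, and_false, false_or, or_false]
    omega
  -- equation at vertex g-1 (degree 3)
  have hEg1 : x (g - 2) + x 0 + x g = (mu - 3) * x (g - 1) := by
    have h2 : ((g : ℕ) - 2) < n := by omega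
    have h0 : (0 : ℕ) < n := by omega
    have hgn' : g < n := hng
    have hne1 : (⟨g - 2, h2⟩ : Fin n) ≠ ⟨0, h0⟩ := by simp [Fin.ext_iff]; omega
    have hne2 : (⟨g - 2, h2⟩ : Fin n) ≠ ⟨g, hgn'⟩ := by simp [Fin.ext_iff]; omega
    have hne3 : (⟨0, h0⟩ : Fin n) ≠ ⟨g, hgn'⟩ := by simp [Fin.ext_iff]; omega
    have hS : (Ung n g).neighborFinset ⟨g - 1, by omega⟩
        = {⟨g - 2, h2⟩, ⟨0, h0⟩, ⟨g, hgn'⟩} := by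
      refine hnb _ _ fun u => ?_
      rw [ung_adj_iff n g hg]
      simp only [Finset.mem_insert, Finset.mem_singleton, Fin.ext_iff, Fin.val_mk, true_and, and_true, false_and, and_false, false_or, or_false]
      omega
    have e := hA ⟨g - 1, by omega⟩
    rw [← SimpleGraph.card_neighborFinset_eq_degree, hS] at e
    rw [Finset.sum_insert (by simp [Fin.ext_iff]; omega),
      Finset.sum_pair hne3,
      Finset.card_insert_of_notMem (by simp [Fin.ext_iff]; omega),
      Finset.card_pair hne3] at e
    rw [hxeq (g-2) h2, hxeq 0 h0, hxeq g hgn', hxeq (g-1) (by omega)]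
    push_cast at e
    linarith
  -- equation at vertex n-1 (degree 1)
  have hEend : x (n - 2) = (mu - 1) * x (n - 1) := by
    have h2 : (n : ℕ) - 2 < n := by omega
    have hS : (Ung n g).neighborFinset ⟨n - 1, by omega⟩ = {⟨n - 2, h2⟩} := by
      refine hnb _ _ fun u => ?_
      rw [ung_adj_iff n g hg]
      simp only [Finset.mem_singleton, Fin.ext_iff, Fin.val_mk, true_and, and_true, false_and, and_false, false_or, or_false]
      omega
    have e := hA ⟨n - 1, by omega⟩
    rw [← SimpleGraph.card_neighborFinset_eq_degree, hS, Finset.card_singleton,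
      Finset.sum_singleton] at e
    rw [hxeq (n-2) h2, hxeq (n-1) (by omega)]
    push_cast at e
    linarith
  -- Claim 1: downward induction along the path
  have hpath : ∀ k j, g ≤ j → j + k = n - 1 → x (j - 1) > 2 * x j := by
    intro k
    induction k with
    | zero =>
      intro j hj hjn
      have hj' : j = n - 1 := by omega
      subst hj'
      have := hEend
      have hp := hx (n - 1) (by omega)
      have : x (n - 1 - 1) = (mu - 1) * x (n - 1) := by
        rwa [show n - 1 - 1 = n - 2 by omega]
      rw [this]
      linarith [mul_nonneg (by linarith : (0:ℝ) ≤ mu - 4.5) hp.le]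
    | succ k ih =>
      intro j hj hjn
      have e := hEint j (by omega) (by omega) (by omega)
      have hih := ih (j + 1) (by omega) (by omega)
      rw [show j + 1 - 1 = j by omega] at hih
      have hp := hx j (by omega)
      linarith [mul_nonneg (by linarith : (0:ℝ) ≤ mu - 4.5) hp.le]
  have claim1 : ∀ j, g ≤ j → j ≤ n - 1 → x (j - 1) > 2 * x j :=
    fun j h1 h2 => hpath (n - 1 - j) j h1 (by omega)
  -- Symmetry: x 0 = x (g-2)
  set m : ℕ := g / 2 - 1 with hm
  have hm1 : 1 ≤ m := by omega
  have key : ∀ z : ℕ → ℝ, z 1 = (mu - 2) * z 0 →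
      (∀ i, 1 ≤ i → i + 1 ≤ m → z (i - 1) + z (i + 1) = (mu - 2) * z i) →
      z m = 0 → ¬ 0 < z 0 := by
    intro z h1 hrec hzm h0
    have Q : ∀ i, i + 1 ≤ m → z 0 ≤ z i ∧ 1.5 * z i ≤ z (i + 1) := by
      intro i
      induction i with
      | zero =>
        intro _
        refine ⟨le_refl _, ?_⟩
        have : z (0 + 1) = (mu - 2) * z 0 := h1
        rw [this]
        linarith [mul_nonneg (by linarith : (0:ℝ) ≤ mu - 4.5) h0.le]
      | succ i ih =>
        intro hi2
        obtain ⟨ha, hb⟩ := ih (by omega)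
        have e := hrec (i + 1) (by omega) (by omega)
        rw [show i + 1 - 1 = i by omega] at e
        have hz1 : 0 ≤ z (i + 1) := by linarith
        constructor
        · linarith
        · linarith [mul_nonneg (by linarith : (0:ℝ) ≤ mu - 4.5) hz1]
    obtain ⟨ha, hb⟩ := Q (m - 1) (by omega)
    rw [show m - 1 + 1 = m by omega, hzm] at hb
    linarith
  set y : ℕ → ℝ := fun i => x i - x (g - 2 - i) with hy
  have hy1 : y 1 = (mu - 2) * y 0 := by
    have e1 := hE0
    have e2 := hEint (g - 2) (by omega) (by omega) (by omega)
    rw [show g - 2 - 1 = g - 3 by omega, show g - 2 + 1 = g - 1 by omega] at e2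
    simp only [hy]
    rw [show g - 2 - 1 = g - 3 by omega, show g - 2 - 0 = g - 2 by omega]
    linarith
  have hyrec : ∀ i, 1 ≤ i → i + 1 ≤ m → y (i - 1) + y (i + 1) = (mu - 2) * y i := by
    intro i h1 h2
    have e1 := hEint i (by omega) (by omega) (by omega)
    have e2 := hEint (g - 2 - i) (by omega) (by omega) (by omega)
    rw [show g - 2 - i - 1 = g - 3 - i by omega,
      show g - 2 - i + 1 = g - 1 - i by omega] at e2
    simp only [hy]
    rw [show g - 2 - (i - 1) = g - 1 - i by omega,
      show g - 2 - (i + 1) = g - 3 - i by omega]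
    linarith
  have hym : y m = 0 := by
    simp only [hy]
    rw [show g - 2 - m = m by omega]
    ring
  have hy0 : x 0 = x (g - 2) := by
    have k1 := key y hy1 hyrec hym
    have k2 := key (fun i => -y i)
      (by show -y 1 = (mu - 2) * -y 0; rw [hy1]; ring)
      (fun i a b => by
        show -y (i - 1) + -y (i + 1) = (mu - 2) * -y i
        have := hyrec i a b; linarith)
      (by show -y m = 0; rw [hym]; ring)
    have k1' : y 0 ≤ 0 := not_lt.mp k1
    have k2' : -y 0 ≤ 0 := not_lt.mp k2
    have hy00 : y 0 = 0 := by linarith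
    simp only [hy] at hy00
    rw [Nat.sub_zero] at hy00
    linarith
  -- Claim 2
  have claim2 : x (g - 1) < 2 * x 0 := by
    have e := hEg1
    have c1 := claim1 g le_rfl (by omega)
    have hp := hx (g - 1) (by omega)
    have hp0 := hx 0 (by omega)
    have hpg := hx g hng
    linarith [mul_nonneg (by linarith : (0:ℝ) ≤ mu - 4.5) hp.le, hy0]
  -- Claim 3
  have claim3 : ∀ j, 1 ≤ j → 2 * j + 2 ≤ g → x (j - 1) < 2 * x j := by
    intro j
    induction j with
    | zero => omega
    | succ j ih =>
      intro _ hj2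
      rcases Nat.eq_zero_or_pos j with h | h
      · subst h
        have e := hE0
        have hp0 := hx 0 (by omega)
        simp only [Nat.add_sub_cancel]
        linarith [mul_nonneg (by linarith : (0:ℝ) ≤ mu - 4.5) hp0.le, claim2]
      · have hih := ih h (by omega)
        have e := hEint j (by omega) (by omega) (by omega)
        have hp := hx j (by omega)
        rw [Nat.add_sub_cancel]
        linarith [mul_nonneg (by linarith : (0:ℝ) ≤ mu - 4.5) hp.le]
  refine ⟨fun j hj1 hj2 => ?_, ?_, fun j hj1 hj2 => ?_⟩
  · have h := claim1 j hj1 hj2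
    rw [hxeq (j - 1) (by omega), hxeq j (by omega)] at h
    exact h
  · have h := claim2
    rw [hxeq (g - 1) (by omega), hxeq 0 (by omega)] at h
    exact h
  · have h := claim3 j hj1 hj2
    rw [hxeq (j - 1) (by omega), hxeq j (by omega)] at h
    exact h
end

section
/- Let g ≥ 5 be odd and let T = \overline{U}_{n,g} be the tree obtained from the unicyclic graph U_{n,g} (g-cycle on vertices 1,…,g with pendant path g, g+1,…, n at vertex g) by deleting the edge {(g-1)/2, (g+1)/2}. Let X be a positive eigenvector of B(T) for its largest eigenvalue μ ≥ 4.383. Then x_i > x_{g+2i} for all 1 ≤ i ≤ min((g-1)/2, ⌊(n-g)/2⌋). -/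
open Matrix

/-- The tree `\overline{U}_{n,g}` (for `g` odd) on vertices `0, …, n-1`
(vertex `i` here is vertex `i+1` of the paper): the unicyclic graph `U_{n,g}`
with the cycle edge between the paper vertices `(g-1)/2` and `(g+1)/2`
(here indices `(g-3)/2` and `(g-1)/2`, i.e. the consecutive edge whose larger
endpoint `b` satisfies `2b + 1 = g`) deleted. -/
def UngBar (n g : ℕ) : SimpleGraph (Fin n) :=
  SimpleGraph.fromRel (fun a b =>
    (b.val = a.val + 1 ∧ 2 * b.val + 1 ≠ g) ∨ (a.val = 0 ∧ b.val = g - 1))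

instance (n g : ℕ) : DecidableRel (UngBar n g).Adj := fun a b =>
  decidable_of_iff _ (SimpleGraph.fromRel_adj _ a b).symm

namespace Stmt18aux

noncomputable def fs (y : ℝ) : ℕ → ℝ
  | 0 => -1
  | k+1 => y - 2 - 1/(fs y k)

lemma fs_succ (y : ℝ) (k : ℕ) : fs y (k+1) = y - 2 - 1/(fs y k) := rfl

lemma fs_one (y : ℝ) : fs y 1 = y - 1 := by
  norm_num [fs]; ring

lemma cubic {y : ℝ} (hy : 4.383 ≤ y) : y^2 ≤ (y-2)^2*(y-1) := by
  nlinarith [sq_nonneg (y - 4.383), pow_le_pow_left₀ (by norm_num : (0:ℝ) ≤ 4.383) hy 2]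

lemma fs_bounds {y : ℝ} (hy : 4.383 ≤ y) :
    ∀ k, 1 ≤ k → Real.sqrt (y-1) < fs y k ∧ fs y k ≤ y - 1 := by
  have h0 : (0:ℝ) ≤ y - 1 := by linarith
  have hs2 : Real.sqrt (y-1) ^ 2 = y - 1 := Real.sq_sqrt h0
  have hs0 : 0 ≤ Real.sqrt (y-1) := Real.sqrt_nonneg _
  have hs1 : 1 < Real.sqrt (y-1) := by nlinarith
  have hkey : y ≤ (y-2) * Real.sqrt (y-1) := by
    by_contra h
    push_neg at h
    have h2 : 0 < y + (y-2) * Real.sqrt (y-1) := by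
      nlinarith [mul_nonneg (show (0:ℝ) ≤ y-2 by linarith) hs0]
    nlinarith [cubic hy, mul_pos (show (0:ℝ) < y - (y-2)*Real.sqrt (y-1) by linarith) h2]
  intro k hk
  induction k with
  | zero => omega
  | succ k ih =>
    rcases Nat.eq_or_lt_of_le hk with h1 | h1
    · obtain rfl : k = 0 := by omega
      rw [fs_one]
      exact ⟨by nlinarith, le_refl _⟩
    · have hk1 : 1 ≤ k := by omega
      obtain ⟨ihl, ihu⟩ := ih hk1
      have hfpos : 0 < fs y k := by nlinarith
      rw [fs_succ]
      constructor
      · have h1s : 1/(fs y k) < 1/(Real.sqrt (y-1)) := by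
          apply one_div_lt_one_div_of_lt (by nlinarith) ihl
        have hspos : 0 < Real.sqrt (y-1) := by linarith
        have : 1/(Real.sqrt (y-1)) ≤ (y - 2) - Real.sqrt (y-1) := by
          rw [div_le_iff₀ hspos]; nlinarith
        linarith
      · have : 0 < 1/(fs y k) := by positivity
        linarith

end Stmt18aux

open Stmt18aux

set_option maxHeartbeats 1000000 in
/-- Proposition 3.5(iv): in the paper's labelling (here shifted down by one),
if `μ ≥ 4.383` then `x_i > x_{g+2i}` for `1 ≤ i ≤ min((g-1)/2, ⌊(n-g)/2⌋)`. -/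
theorem stmt_18 (n g : ℕ) (hg : 5 ≤ g) (hodd : Odd g) (hng : g < n)
    (mu : ℝ)
    (hmu : IsGreatest
      (spectrum ℝ ((UngBar n g).degMatrix ℝ + (UngBar n g).adjMatrix ℝ)) mu)
    (hmu4383 : mu ≥ 4.383)
    (X : Fin n → ℝ) (hXpos : ∀ v, 0 < X v)
    (heig : ((UngBar n g).degMatrix ℝ + (UngBar n g).adjMatrix ℝ).mulVec X
      = mu • X) :
    ∀ (i : ℕ) (hi1 : 1 ≤ i) (hi2 : 2 * i ≤ g - 1) (hi3 : g + 2 * i ≤ n),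
      X ⟨i - 1, by omega⟩ > X ⟨g + 2 * i - 1, by omega⟩ := by
  classical
  obtain ⟨m, hm⟩ := hodd
  have hm2 : 2 ≤ m := by omega
  -- analytic facts about fs at mu
  have hmu' : (4.383:ℝ) ≤ mu := hmu4383
  have hfb := Stmt18aux.fs_bounds hmu'
  have fpos : ∀ k, 1 ≤ k → 0 < fs mu k :=
    fun k hk => lt_of_le_of_lt (Real.sqrt_nonneg _) (hfb k hk).1
  have fle : ∀ k, 1 ≤ k → fs mu k ≤ mu - 1 := fun k hk => (hfb k hk).2
  have fpair : ∀ a b, 1 ≤ a → 1 ≤ b → mu - 1 < fs mu a * fs mu b := by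
    intro a b ha hb
    have h1 := (hfb a ha).1; have h2 := (hfb b hb).1
    have hs0 : 0 ≤ Real.sqrt (mu-1) := Real.sqrt_nonneg _
    have hs2 : Real.sqrt (mu-1)^2 = mu - 1 := Real.sq_sqrt (by linarith)
    nlinarith
  -- eigen equations
  have heq : ∀ v : Fin n, ((UngBar n g).degree v : ℝ) * X v
      + ∑ u ∈ (UngBar n g).neighborFinset v, X u = mu * X v := by
    intro v
    have h := congrFun heig v
    rwa [Matrix.add_mulVec, Pi.add_apply, SimpleGraph.degMatrix_mulVec_apply,
      SimpleGraph.adjMatrix_mulVec_apply, Pi.smul_apply, smul_eq_mul] at h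
  have adj_iff : ∀ a b : Fin n, (UngBar n g).Adj a b ↔ (¬ a.val = b.val ∧
      ((b.val = a.val+1 ∧ ¬ (2*b.val+1 = g)) ∨ (a.val = b.val+1 ∧ ¬ (2*a.val+1 = g))
        ∨ (a.val = 0 ∧ b.val = g-1) ∨ (b.val = 0 ∧ a.val = g-1))) := by
    intro a b
    rw [UngBar, SimpleGraph.fromRel_adj, ne_eq, Fin.ext_iff]
    tauto
  have leaf_eq : ∀ (v a : Fin n), (UngBar n g).neighborFinset v = {a} →
      X v + X a = mu * X v := by
    intro v a hset
    have h2 := heq v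
    rw [← SimpleGraph.card_neighborFinset_eq_degree, hset, Finset.sum_singleton,
      Finset.card_singleton] at h2
    push_cast at h2
    linarith
  have two_eq : ∀ (v a b : Fin n), a ≠ b → (UngBar n g).neighborFinset v = {a, b} →
      2 * X v + (X a + X b) = mu * X v := by
    intro v a b hab hset
    have h2 := heq v
    rw [← SimpleGraph.card_neighborFinset_eq_degree, hset,
      Finset.sum_insert (by simp [hab]), Finset.sum_singleton,
      Finset.card_insert_of_notMem (by simp [hab]), Finset.card_singleton] at h2
    push_cast at h2
    linarith
  intro i hi1 hi2 hi3
  have him : i ≤ m := by omega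
  have hn2 : g + 2 ≤ n := by omega
  -- canonical vector entries
  set XX : ℕ → ℝ := fun p => if h : p < n then X ⟨p, h⟩ else 0 with hXXdef
  have hXXeq : ∀ (p : ℕ) (hp : p < n), XX p = X ⟨p, hp⟩ := fun p hp => dif_pos hp
  have hXXpos : ∀ (p : ℕ), p < n → 0 < XX p := by
    intro p hp; rw [hXXeq p hp]; exact hXpos _
  -- the five local eigen-equations
  have eqA0 : XX (m-1) + XX (m-2) = mu * XX (m-1) := by
    have hset : (UngBar n g).neighborFinset ⟨m-1, by omega⟩ = {⟨m-2, by omega⟩} := by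
      ext u
      have hu := u.2
      rw [SimpleGraph.mem_neighborFinset, adj_iff]
      simp only [Finset.mem_singleton, Fin.ext_iff, true_and,
        and_true, false_and, and_false, or_false, false_or]
      omega
    have e := leaf_eq _ _ hset
    rw [hXXeq (m-1) (by omega), hXXeq (m-2) (by omega)]
    exact e
  have eqAint : ∀ v, 1 ≤ v → v + 2 ≤ m →
      2 * XX v + (XX (v-1) + XX (v+1)) = mu * XX v := by
    intro v h1 h2
    have hset : (UngBar n g).neighborFinset ⟨v, by omega⟩
        = {⟨v-1, by omega⟩, ⟨v+1, by omega⟩} := by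
      ext u
      have hu := u.2
      rw [SimpleGraph.mem_neighborFinset, adj_iff]
      simp only [Finset.mem_insert, Finset.mem_singleton, Fin.ext_iff, true_and,
        and_true, false_and, and_false, or_false, false_or]
      omega
    have e := two_eq _ _ _ (by simp only [ne_eq, Fin.ext_iff]; omega) hset
    rw [hXXeq v (by omega), hXXeq (v-1) (by omega), hXXeq (v+1) (by omega)]
    exact e
  have eqA00 : 2 * XX 0 + (XX 1 + XX (g-1)) = mu * XX 0 := by
    have hset : (UngBar n g).neighborFinset ⟨0, by omega⟩
        = {⟨1, by omega⟩, ⟨g-1, by omega⟩} := by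
      ext u
      have hu := u.2
      rw [SimpleGraph.mem_neighborFinset, adj_iff]
      simp only [Finset.mem_insert, Finset.mem_singleton, Fin.ext_iff, true_and,
        and_true, false_and, and_false, or_false, false_or]
      omega
    have e := two_eq _ _ _ (by simp only [ne_eq, Fin.ext_iff]; omega) hset
    rw [hXXeq 0 (by omega), hXXeq 1 (by omega), hXXeq (g-1) (by omega)]
    exact e
  have eqB0 : XX (n-1) + XX (n-2) = mu * XX (n-1) := by
    have hset : (UngBar n g).neighborFinset ⟨n-1, by omega⟩ = {⟨n-2, by omega⟩} := by
      ext u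
      have hu := u.2
      rw [SimpleGraph.mem_neighborFinset, adj_iff]
      simp only [Finset.mem_singleton, Fin.ext_iff, true_and,
        and_true, false_and, and_false, or_false, false_or]
      omega
    have e := leaf_eq _ _ hset
    rw [hXXeq (n-1) (by omega), hXXeq (n-2) (by omega)]
    exact e
  have eqBint : ∀ v, g ≤ v → v + 2 ≤ n →
      2 * XX v + (XX (v-1) + XX (v+1)) = mu * XX v := by
    intro v h1 h2
    have hset : (UngBar n g).neighborFinset ⟨v, by omega⟩
        = {⟨v-1, by omega⟩, ⟨v+1, by omega⟩} := by
      ext u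
      have hu := u.2
      rw [SimpleGraph.mem_neighborFinset, adj_iff]
      simp only [Finset.mem_insert, Finset.mem_singleton, Fin.ext_iff, true_and,
        and_true, false_and, and_false, or_false, false_or]
      omega
    have e := two_eq _ _ _ (by simp only [ne_eq, Fin.ext_iff]; omega) hset
    rw [hXXeq v (by omega), hXXeq (v-1) (by omega), hXXeq (v+1) (by omega)]
    exact e
  -- branch values
  set av : ℕ → ℝ := fun k => if k < m then XX (m-1-k) else XX (g-1) with havdef
  set bv : ℕ → ℝ := fun k => XX (n-1-k) with hbvdef
  have avlt : ∀ k, k < m → av k = XX (m-1-k) := fun k h => if_pos h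
  have avge : ∀ k, ¬ (k < m) → av k = XX (g-1) := fun k h => if_neg h
  have bveq : ∀ k, bv k = XX (n-1-k) := fun _ => rfl
  have avpos : ∀ k, 0 < av k := by
    intro k
    by_cases h : k < m
    · rw [avlt k h]; exact hXXpos _ (by omega)
    · rw [avge k h]; exact hXXpos _ (by omega)
  have bvpos : ∀ k, 0 < bv k := fun k => hXXpos _ (by omega)
  -- recurrence on branch A
  have recA : ∀ k, 1 ≤ k → k ≤ m → av k = fs mu k * av (k-1) := by
    intro k
    induction k with
    | zero => omega
    | succ k ih =>
      intro _ hkm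
      rcases Nat.eq_zero_or_pos k with rfl | hk1
      · rw [fs_one, avlt 1 (by omega), avlt 0 (by omega)]
        rw [show m - 1 - 1 = m - 2 by omega, show m - 1 - 0 = m - 1 by omega]
        linarith [eqA0]
      · have ihr := ih (by omega) (by omega)
        have hfne : fs mu k ≠ 0 := ne_of_gt (fpos k hk1)
        have e : 2 * av k + (av (k+1) + av (k-1)) = mu * av k := by
          by_cases hc : k + 1 < m
          · rw [avlt k (by omega), avlt (k+1) hc, avlt (k-1) (by omega)]
            have := eqAint (m-1-k) (by omega) (by omega)
            rw [show m-1-k-1 = m-1-(k+1) by omega,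
              show m-1-k+1 = m-1-(k-1) by omega] at this
            linarith
          · have hkm' : k + 1 = m := by omega
            rw [avlt k (by omega), avge (k+1) (by omega), avlt (k-1) (by omega)]
            rw [show m-1-k = 0 by omega, show m-1-(k-1) = 1 by omega]
            linarith [eqA00]
        have hprev : av (k-1) = av k / fs mu k := by
          rw [ihr]; field_simp
        have hstep : av (k+1) = (mu - 2) * av k - av (k-1) := by linarith
        rw [hstep, hprev, fs_succ, show k + 1 - 1 = k by omega]
        field_simp
  -- recurrence on branch B
  have recB : ∀ k, 1 ≤ k → k ≤ n - g → bv k = fs mu k * bv (k-1) := by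
    intro k
    induction k with
    | zero => omega
    | succ k ih =>
      intro _ hkg
      rcases Nat.eq_zero_or_pos k with rfl | hk1
      · rw [fs_one, bveq 1, bveq 0]
        rw [show n - 1 - 1 = n - 2 by omega, show n - 1 - 0 = n - 1 by omega]
        linarith [eqB0]
      · have ihr := ih (by omega) (by omega)
        have hfne : fs mu k ≠ 0 := ne_of_gt (fpos k hk1)
        have e : 2 * bv k + (bv (k+1) + bv (k-1)) = mu * bv k := by
          rw [bveq k, bveq (k+1), bveq (k-1)]
          have := eqBint (n-1-k) (by omega) (by omega)
          rw [show n-1-k-1 = n-1-(k+1) by omega,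
            show n-1-k+1 = n-1-(k-1) by omega] at this
          linarith
        have hprev : bv (k-1) = bv k / fs mu k := by
          rw [ihr]; field_simp
        have hstep : bv (k+1) = (mu - 2) * bv k - bv (k-1) := by linarith
        rw [hstep, hprev, fs_succ, show k + 1 - 1 = k by omega]
        field_simp
  -- top values agree
  have havm : av m = bv (n-g) := by
    rw [avge m (by omega), bveq (n-g), show n - 1 - (n-g) = g - 1 by omega]
  -- main downward induction
  have main : ∀ j, j ≤ i →
      bv (n-g-2*j) ≤ av (m-j) ∧ (1 ≤ j → bv (n-g-2*j) < av (m-j)) := by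
    intro j
    induction j with
    | zero =>
      intro _
      rw [Nat.mul_zero, Nat.sub_zero, Nat.sub_zero]
      exact ⟨le_of_eq havm.symm, by omega⟩
    | succ j ih =>
      intro hj
      obtain ⟨ihle, -⟩ := ih (by omega)
      have h1 : av (m-j) = fs mu (m-j) * av (m-j-1) := recA (m-j) (by omega) (by omega)
      have h2 : bv (n-g-2*j) = fs mu (n-g-2*j) * bv (n-g-2*j-1) :=
        recB (n-g-2*j) (by omega) (by omega)
      have h3 : bv (n-g-2*j-1) = fs mu (n-g-2*j-1) * bv (n-g-2*j-1-1) :=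
        recB (n-g-2*j-1) (by omega) (by omega)
      have hp : 0 < fs mu (m-j) := fpos _ (by omega)
      have hple : fs mu (m-j) ≤ mu - 1 := fle _ (by omega)
      have hq : mu - 1 < fs mu (n-g-2*j) * fs mu (n-g-2*j-1) :=
        fpair _ _ (by omega) (by omega)
      have hA : 0 < av (m-j-1) := avpos _
      have hB : 0 < bv (n-g-2*j-1-1) := bvpos _
      have hchain : fs mu (m-j) * bv (n-g-2*j-1-1) < fs mu (m-j) * av (m-j-1) := by
        calc fs mu (m-j) * bv (n-g-2*j-1-1)
            ≤ (mu-1) * bv (n-g-2*j-1-1) := mul_le_mul_of_nonneg_right hple hB.le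
          _ < (fs mu (n-g-2*j) * fs mu (n-g-2*j-1)) * bv (n-g-2*j-1-1) :=
              mul_lt_mul_of_pos_right hq hB
          _ = bv (n-g-2*j) := by rw [h2, h3]; ring
          _ ≤ av (m-j) := ihle
          _ = fs mu (m-j) * av (m-j-1) := h1
      have hlt : bv (n-g-2*j-1-1) < av (m-j-1) := lt_of_mul_lt_mul_left hchain hp.le
      constructor
      · rw [show m - (j+1) = m - j - 1 by omega,
          show n - g - 2*(j+1) = n - g - 2*j - 1 - 1 by omega]
        exact le_of_lt hlt
      · intro _
        rw [show m - (j+1) = m - j - 1 by omega,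
          show n - g - 2*(j+1) = n - g - 2*j - 1 - 1 by omega]
        exact hlt
  have hfinal := (main i le_rfl).2 hi1
  rw [avlt (m-i) (by omega), show m - 1 - (m - i) = i - 1 by omega] at hfinal
  rw [bveq (n-g-2*i), show n - 1 - (n - g - 2*i) = g + 2*i - 1 by omega] at hfinal
  rw [hXXeq (i-1) (by omega), hXXeq (g+2*i-1) (by omega)] at hfinal
  exact hfinal
end

section
/- Let n > g ≥ 3 with g odd. The Laplacian spectral radius of the unicyclic graph U_{n,g} equals the Laplacian spectral radius of the tree \overline{U}_{n,g} obtained from U_{n,g} by deleting the cycle edge {(g-1)/2, (g+1)/2}: λ(U_{n,g}) = λ(\overline{U}_{n,g}). -/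
/-!
Reflecting the cycle about the vertex where the path is attached is an automorphism `σ` of
`U_{n,g}` that swaps the two endpoints of the deleted edge. Let `x` be an eigenvector of
`L(U_{n,g})` for `λ = λ(U_{n,g})`. If `x + x ∘ σ ≠ 0`, it is a `σ`-symmetric eigenvector for
`λ`; being constant across the deleted edge, it is also an eigenvector of
`L(\overline{U}_{n,g})`, so `λ ≤ λ(\overline{U}_{n,g})`. Otherwise `x` is antisymmetric, hence
vanishes at the fixed points of `σ`, and evaluating `L x = λ x` at a vertex where `|x|` is
maximal, which has degree 2, gives `λ ≤ 4`; but `λ(\overline{U}_{n,g}) ≥ Δ + 1 = 4`, as the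
Laplacian of the star at a vertex of degree `d` has eigenvalue `d + 1`. The reverse inequality
holds because adding edges increases the Laplacian quadratic form.
-/

open Matrix

namespace Matrix

variable {n K : Type*} [Fintype n] [DecidableEq n]

theorem IsHermitian.dotProduct_mulVec_le_s19 {A : Matrix n n ℝ} (hA : A.IsHermitian) {t : ℝ}
    (ht : t ∈ upperBounds (spectrum ℝ A)) (x : n → ℝ) : x ⬝ᵥ A *ᵥ x ≤ t * (x ⬝ᵥ x) := by
  have hpsd : (algebraMap ℝ _ t - A).PosSemidef := by
    refine posSemidef_iff_isHermitian_and_spectrum_nonneg.2 ⟨?_, ?_⟩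
    · exact (IsSelfAdjoint.algebraMap _ (.all t)).sub hA
    · rw [← spectrum.singleton_sub_eq]
      rintro _ ⟨_, rfl, μ, hμ, rfl⟩
      exact sub_nonneg.2 (ht hμ)
  have := hpsd.dotProduct_mulVec_nonneg x
  rwa [sub_mulVec, dotProduct_sub, Algebra.algebraMap_eq_smul_one, smul_mulVec, one_mulVec,
    dotProduct_smul, smul_eq_mul, sub_nonneg, star_trivial] at this

theorem mem_spectrum_iff_exists_mulVec_eq_smul [Field K] {A : Matrix n n K} {μ : K} :
    μ ∈ spectrum K A ↔ ∃ x ≠ 0, A *ᵥ x = μ • x := by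
  simp only [← spectrum_toLin', ← Module.End.hasEigenvalue_iff_mem_spectrum,
    Module.End.hasEigenvalue_iff, Submodule.ne_bot_iff, Module.End.mem_eigenspace_iff,
    toLin'_apply]
  tauto

end Matrix

namespace SimpleGraph

variable {V R : Type*} {G H : SimpleGraph V}

def starAt (G : SimpleGraph V) (v : V) : SimpleGraph V :=
  fromRel fun a b => a = v ∧ G.Adj v b

instance [DecidableEq V] [DecidableRel G.Adj] (v : V) : DecidableRel (G.starAt v).Adj :=
  fun a b => decidable_of_iff _ (fromRel_adj _ a b).symm

theorem starAt_adj {v a b : V} :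
    (G.starAt v).Adj a b ↔ (a = v ∧ G.Adj v b) ∨ (b = v ∧ G.Adj v a) := by
  rw [starAt, fromRel_adj]
  constructor
  · exact fun h => h.2
  · rintro (⟨rfl, h⟩ | ⟨rfl, h⟩)
    · exact ⟨h.ne, .inl ⟨rfl, h⟩⟩
    · exact ⟨h.ne', .inr ⟨rfl, h⟩⟩

theorem starAt_le (v : V) : G.starAt v ≤ G := by
  intro a b h
  rcases starAt_adj.1 h with ⟨rfl, h⟩ | ⟨rfl, h⟩
  · exact h
  · exact h.symm

variable [Fintype V] [DecidableEq V] [DecidableRel G.Adj] [DecidableRel H.Adj]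

theorem lapMatrix_mulVec_apply_eq_sum [NonAssocRing R] (x : V → R) (i : V) :
    (G.lapMatrix R *ᵥ x) i = ∑ j, if G.Adj i j then x i - x j else 0 := by
  rw [lapMatrix_mulVec_apply, degree_eq_sum_if_adj, Finset.sum_mul, neighborFinset_eq_filter,
    Finset.sum_filter, ← Finset.sum_sub_distrib]
  exact Finset.sum_congr rfl fun j _ => by split_ifs <;> simp

theorem lapMatrix_mulVec_comp_iso [NonAssocRing R] (σ : G ≃g G) (x : V → R) :
    G.lapMatrix R *ᵥ (x ∘ σ) = (G.lapMatrix R *ᵥ x) ∘ σ := by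
  ext i
  simp only [lapMatrix_mulVec_apply_eq_sum, Function.comp_apply]
  conv_rhs => rw [← σ.toEquiv.sum_comp]
  simp [σ.map_adj_iff]

theorem lapMatrix_mulVec_eq_of_le [NonAssocRing R] (hHG : H ≤ G) {x : V → R}
    (hx : ∀ i j, G.Adj i j → ¬ H.Adj i j → x i = x j) :
    H.lapMatrix R *ᵥ x = G.lapMatrix R *ᵥ x := by
  ext i
  simp only [lapMatrix_mulVec_apply_eq_sum]
  refine Finset.sum_congr rfl fun j _ => ?_
  by_cases hH : H.Adj i j
  · simp [hH, hHG hH]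
  · by_cases hG : G.Adj i j
    · simp [hH, hG, hx i j hG hH]
    · simp [hH, hG]

theorem dotProduct_lapMatrix_mulVec_mono (hHG : H ≤ G) (x : V → ℝ) :
    x ⬝ᵥ H.lapMatrix ℝ *ᵥ x ≤ x ⬝ᵥ G.lapMatrix ℝ *ᵥ x := by
  simp only [← toLinearMap₂'_apply', lapMatrix_toLinearMap₂']
  gcongr with i _ j _
  split_ifs with hH hG
  · rfl
  · exact absurd (hHG hH) hG
  · positivity
  · rfl

theorem le_of_mem_spectrum_lapMatrix_of_le (hHG : H ≤ G) {μ t : ℝ}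
    (hμ : μ ∈ spectrum ℝ (H.lapMatrix ℝ)) (ht : t ∈ upperBounds (spectrum ℝ (G.lapMatrix ℝ))) :
    μ ≤ t := by
  obtain ⟨x, hx0, hx⟩ := mem_spectrum_iff_exists_mulVec_eq_smul.1 hμ
  have hxx : 0 < x ⬝ᵥ x := dotProduct_self_star_pos_iff.2 hx0
  refine le_of_mul_le_mul_right ?_ hxx
  calc μ * (x ⬝ᵥ x) = x ⬝ᵥ H.lapMatrix ℝ *ᵥ x := by rw [hx, dotProduct_smul, smul_eq_mul]
    _ ≤ x ⬝ᵥ G.lapMatrix ℝ *ᵥ x := dotProduct_lapMatrix_mulVec_mono hHG x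
    _ ≤ t * (x ⬝ᵥ x) := (G.isHermitian_lapMatrix ℝ).dotProduct_mulVec_le_s19 ht x

theorem le_two_mul_degree_of_lapMatrix_mulVec_eq_smul {x : V → ℝ} {μ : ℝ}
    (hx : G.lapMatrix ℝ *ᵥ x = μ • x) {i : V} (hxi : x i ≠ 0) (hmax : ∀ j, |x j| ≤ |x i|) :
    μ ≤ 2 * G.degree i := by
  have heq : μ * x i = G.degree i * x i - ∑ j ∈ G.neighborFinset i, x j := by
    rw [← lapMatrix_mulVec_apply, hx, Pi.smul_apply, smul_eq_mul]
  have hsum : |∑ j ∈ G.neighborFinset i, x j| ≤ G.degree i * |x i| := by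
    calc |∑ j ∈ G.neighborFinset i, x j| ≤ ∑ j ∈ G.neighborFinset i, |x j| :=
          Finset.abs_sum_le_sum_abs _ _
      _ ≤ G.degree i * |x i| := by
          have := Finset.sum_le_card_nsmul _ _ _ fun j (_ : j ∈ G.neighborFinset i) => hmax j
          rwa [card_neighborFinset_eq_degree, nsmul_eq_mul] at this
  have : μ * |x i| ≤ 2 * G.degree i * |x i| := by
    calc μ * |x i| ≤ |μ * x i| := by rw [abs_mul]; gcongr; exact le_abs_self μ
      _ ≤ G.degree i * |x i| + |∑ j ∈ G.neighborFinset i, x j| := by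
          rw [heq]; refine (abs_sub _ _).trans ?_; rw [abs_mul, Nat.abs_cast]
      _ ≤ 2 * G.degree i * |x i| := by linarith
  exact le_of_mul_le_mul_right this (abs_pos.2 hxi)

theorem degree_add_one_mem_spectrum_lapMatrix_starAt {v : V} (hv : G.degree v ≠ 0) :
    (G.degree v + 1 : ℝ) ∈ spectrum ℝ ((G.starAt v).lapMatrix ℝ) := by
  set y : V → ℝ := fun j => if j = v then (G.degree v : ℝ) else if G.Adj v j then -1 else 0
  refine mem_spectrum_iff_exists_mulVec_eq_smul.2 ⟨y, ?_, ?_⟩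
  · exact Function.ne_iff.2 ⟨v, by simpa [y] using hv⟩
  ext i
  rw [lapMatrix_mulVec_apply_eq_sum, Pi.smul_apply, smul_eq_mul]
  by_cases hiv : i = v
  · subst hiv
    have : ∀ j, ((if (G.starAt i).Adj i j then y i - y j else 0) =
        if G.Adj i j then (G.degree i + 1 : ℝ) else 0) := by
      intro j
      by_cases hj : G.Adj i j
      · simp [starAt_adj, hj, y, hj.ne']
      · simp [starAt_adj, hj]
    rw [Finset.sum_congr rfl fun j _ => this j, ← Finset.sum_filter, ← neighborFinset_eq_filter]
    simp only [Finset.sum_const, card_neighborFinset_eq_degree, nsmul_eq_mul, ↓reduceIte, y]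
    ring
  · by_cases hvi : G.Adj v i
    · have : ∀ j, ((if (G.starAt v).Adj i j then y i - y j else 0) =
          if j = v then -(G.degree v + 1 : ℝ) else 0) := by
        intro j
        by_cases hj : j = v
        · subst hj
          simp only [starAt_adj, hiv, SimpleGraph.irrefl, and_self, hvi, or_true, ↓reduceIte, y]
          ring
        · simp [starAt_adj, hj, hiv]
      rw [Finset.sum_congr rfl fun j _ => this j]
      simp [y, hiv, hvi]
    · have : ∀ j, ¬ (G.starAt v).Adj i j := by
        intro j; simp [starAt_adj, hiv, hvi]
      simp [this, y, hiv, hvi]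

theorem degree_add_one_le_of_mem_upperBounds {t : ℝ}
    (ht : t ∈ upperBounds (spectrum ℝ (G.lapMatrix ℝ))) {v : V} (hv : G.degree v ≠ 0) :
    (G.degree v + 1 : ℝ) ≤ t :=
  le_of_mem_spectrum_lapMatrix_of_le (starAt_le v)
    (degree_add_one_mem_spectrum_lapMatrix_starAt hv) ht

end SimpleGraph

section Ung

variable {n g : ℕ}

theorem ung_adj {a b : Fin n} :
    (Ung n g).Adj a b ↔ a.val ≠ b.val ∧ (b.val = a.val + 1 ∨ a.val = b.val + 1 ∨
      (a.val = 0 ∧ b.val = g - 1) ∨ (b.val = 0 ∧ a.val = g - 1)) := by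
  simp only [Ung, SimpleGraph.fromRel_adj, ne_eq, Fin.ext_iff]
  tauto

theorem ungBar_adj {a b : Fin n} :
    (UngBar n g).Adj a b ↔ a.val ≠ b.val ∧ ((b.val = a.val + 1 ∧ 2 * b.val + 1 ≠ g) ∨
      (a.val = b.val + 1 ∧ 2 * a.val + 1 ≠ g) ∨
      (a.val = 0 ∧ b.val = g - 1) ∨ (b.val = 0 ∧ a.val = g - 1)) := by
  simp only [UngBar, SimpleGraph.fromRel_adj, ne_eq, Fin.ext_iff]
  tauto

theorem ungBar_le_ung : UngBar n g ≤ Ung n g := fun a b h => by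
  rw [ungBar_adj] at h
  rw [ung_adj]
  omega

def ungReflect (hgn : g ≤ n) : Ung n g ≃g Ung n g :=
  let f : Fin n → Fin n := fun i =>
    ⟨if (i : ℕ) < g - 1 then g - 2 - i else i, by split_ifs <;> omega⟩
  { Function.Involutive.toPerm f fun i => by ext; simp only [f]; split_ifs <;> omega with
    map_rel_iff' := fun {a b} => by
      change (Ung n g).Adj (f a) (f b) ↔ _
      simp only [f, ung_adj]
      split_ifs <;> omega }

theorem ungReflect_val (hgn : g ≤ n) (i : Fin n) :
    (ungReflect hgn i : ℕ) = if (i : ℕ) < g - 1 then g - 2 - i else i :=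
  rfl

theorem ungReflect_ungReflect (hgn : g ≤ n) (i : Fin n) :
    ungReflect hgn (ungReflect hgn i) = i := by
  ext
  simp only [ungReflect_val]
  split_ifs <;> omega

theorem ungReflect_eq_of_adj_of_not_adj (hgn : g ≤ n) {i j : Fin n} (hU : (Ung n g).Adj i j)
    (hB : ¬ (UngBar n g).Adj i j) : ungReflect hgn i = j := by
  rw [ung_adj] at hU
  rw [ungBar_adj] at hB
  ext
  rw [ungReflect_val]
  split_ifs <;> omega

theorem degree_ung_le_two (hgn : g ≤ n) {i : Fin n} (hi : (i : ℕ) < g - 1) :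
    (Ung n g).degree i ≤ 2 := by
  rw [← SimpleGraph.card_neighborFinset_eq_degree]
  refine (Finset.card_le_card (s := _) (t := {⟨if (i : ℕ) = 0 then g - 1 else i - 1, by
    split_ifs <;> omega⟩, ⟨i + 1, by omega⟩}) fun j hj => ?_).trans Finset.card_le_two
  rw [SimpleGraph.mem_neighborFinset, ung_adj] at hj
  simp only [Finset.mem_insert, Finset.mem_singleton, Fin.ext_iff]
  split_ifs <;> omega

theorem three_le_degree_ungBar (hg : 3 ≤ g) (hng : g < n) :
    3 ≤ (UngBar n g).degree ⟨g - 1, by omega⟩ := by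
  rw [← SimpleGraph.card_neighborFinset_eq_degree]
  refine le_of_eq_of_le ?_ (Finset.card_le_card (s := {⟨g - 2, by omega⟩, ⟨0, by omega⟩,
    ⟨g, hng⟩}) fun j hj => ?_)
  · refine (Finset.card_eq_three.2 ⟨_, _, _, ?_, ?_, ?_, rfl⟩).symm <;>
      simp only [ne_eq, Fin.ext_iff] <;> omega
  · simp only [Finset.mem_insert, Finset.mem_singleton] at hj
    rw [SimpleGraph.mem_neighborFinset, ungBar_adj]
    rcases hj with rfl | rfl | rfl <;> dsimp only <;> omega

theorem four_le_of_mem_upperBounds_spectrum_ungBar (hg : 3 ≤ g) (hng : g < n) {t : ℝ}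
    (ht : t ∈ upperBounds (spectrum ℝ ((UngBar n g).lapMatrix ℝ))) : 4 ≤ t := by
  have hdeg := three_le_degree_ungBar hg hng
  have hle := SimpleGraph.degree_add_one_le_of_mem_upperBounds ht (v := ⟨g - 1, by omega⟩)
    (by omega)
  have : (3 : ℝ) ≤ (UngBar n g).degree ⟨g - 1, by omega⟩ := by exact_mod_cast hdeg
  linarith

theorem le_four_of_ung_eigenvector_antisymm (hgn : g ≤ n) {x : Fin n → ℝ} {μ : ℝ}
    (hx0 : x ≠ 0) (hx : (Ung n g).lapMatrix ℝ *ᵥ x = μ • x)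
    (hanti : ∀ i, x (ungReflect hgn i) = -x i) : μ ≤ 4 := by
  have : Nonempty (Fin n) := ⟨(Function.ne_iff.1 hx0).choose⟩
  obtain ⟨i, hmax⟩ := Finite.exists_max fun i => |x i|
  have hxi : x i ≠ 0 := fun h0 => hx0 (funext fun j => by simpa [h0] using hmax j)
  have hi : (i : ℕ) < g - 1 := by
    by_contra hi
    have hfix : ungReflect hgn i = i := Fin.ext (by rw [ungReflect_val, if_neg hi])
    have := hanti i
    rw [hfix] at this
    exact hxi (by linarith)
  calc μ ≤ 2 * (Ung n g).degree i :=
        SimpleGraph.le_two_mul_degree_of_lapMatrix_mulVec_eq_smul hx hxi hmax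
    _ ≤ 2 * 2 := by gcongr; exact_mod_cast degree_ung_le_two hgn hi
    _ = 4 := by norm_num

theorem lapMatrix_ungBar_mulVec_eq_of_symm (hgn : g ≤ n) {x : Fin n → ℝ}
    (hsym : ∀ i, x (ungReflect hgn i) = x i) :
    (UngBar n g).lapMatrix ℝ *ᵥ x = (Ung n g).lapMatrix ℝ *ᵥ x :=
  SimpleGraph.lapMatrix_mulVec_eq_of_le ungBar_le_ung fun i j hU hB => by
    rw [← hsym i, ungReflect_eq_of_adj_of_not_adj hgn hU hB]

end Ung

theorem stmt_19_general (n g : ℕ) (hg : 3 ≤ g) (hng : g < n)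
    (lam lam' : ℝ)
    (hlam : IsGreatest (spectrum ℝ ((Ung n g).lapMatrix ℝ)) lam)
    (hlam' : IsGreatest (spectrum ℝ ((UngBar n g).lapMatrix ℝ)) lam') :
    lam = lam' := by
  refine le_antisymm ?_
    (SimpleGraph.le_of_mem_spectrum_lapMatrix_of_le ungBar_le_ung hlam'.1 hlam.2)
  obtain ⟨x, hx0, hx⟩ := mem_spectrum_iff_exists_mulVec_eq_smul.1 hlam.1
  set σ := ungReflect hng.le
  set s : Fin n → ℝ := x + x ∘ σ
  have hs : (Ung n g).lapMatrix ℝ *ᵥ s = lam • s := by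
    rw [mulVec_add, SimpleGraph.lapMatrix_mulVec_comp_iso, hx, smul_add]
    rfl
  by_cases hs0 : s = 0
  · have hanti : ∀ i, x (σ i) = -x i := fun i => by
      have := congrFun hs0 i
      simp only [s, Pi.add_apply, Function.comp_apply, Pi.zero_apply] at this
      linarith
    calc lam ≤ 4 := le_four_of_ung_eigenvector_antisymm hng.le hx0 hx hanti
      _ ≤ lam' := four_le_of_mem_upperBounds_spectrum_ungBar hg hng hlam'.2
  · have hsym : ∀ i, s (σ i) = s i := fun i => by
      simp only [s, Pi.add_apply, Function.comp_apply, σ, ungReflect_ungReflect]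
      ring
    refine hlam'.2 (mem_spectrum_iff_exists_mulVec_eq_smul.2 ⟨s, hs0, ?_⟩)
    rw [lapMatrix_ungBar_mulVec_eq_of_symm hng.le hsym, hs]

theorem stmt_19 (n g : ℕ) (hg : 3 ≤ g) (hodd : Odd g) (hng : g < n)
    (lam lam' : ℝ)
    (hlam : IsGreatest (spectrum ℝ ((Ung n g).lapMatrix ℝ)) lam)
    (hlam' : IsGreatest (spectrum ℝ ((UngBar n g).lapMatrix ℝ)) lam') :
    lam = lam' :=
  stmt_19_general n g hg hng lam lam' hlam hlam'
end
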